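/- arXiv:2105.10655 — 6 statements merged into one kernel-verified Lean document; each statement's English description precedes it below -/
import Mathlib

section
/- Let Γ be a nicely distance-balanced graph with diameter d ≥ 3 and γ(Γ) = d+1. Let x_0, x_1, …, x_d be a shortest path in Γ between two vertices x_0 and x_d at distance d. Then the set W_{x_1,x_0} \ {x_1, x_2, …, x_d} contains exactly one vertex u, and this vertex u satisfies d(u,x_1) = d(u,x_0) − 1 with 2 ≤ d(u,x_0) ≤ d. -/
open SimpleGraph Finset

/-- `W_{u,v}`: the set of vertices strictly closer to `u` than to `v`. -/
noncomputable def ndbW {V : Type*} [Fintype V] (G : SimpleGraph V) (u v : V) : Finset V :=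
  Finset.univ.filter fun x => G.dist x u < G.dist x v

/-- `D^i_j(u,v)`: the set of vertices at distance `i` from `u` and `j` from `v`. -/
noncomputable def ndbD {V : Type*} [Fintype V] (G : SimpleGraph V) (u v : V) (i j : ℕ) : Finset V :=
  Finset.univ.filter fun x => G.dist x u = i ∧ G.dist x v = j

/-- `G` is nicely distance-balanced with constant `γ`. -/
def IsNDB {V : Type*} [Fintype V] (G : SimpleGraph V) (γ : ℕ) : Prop :=
  ∀ u v : V, G.Adj u v → (ndbW G u v).card = γ ∧ (ndbW G v u).card = γ

/-- `G` has diameter `d`. -/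
def HasDiam {V : Type*} [Fintype V] (G : SimpleGraph V) (d : ℕ) : Prop :=
  (∀ u v : V, G.dist u v ≤ d) ∧ ∃ u v : V, G.dist u v = d

/-- Let `Γ` be NDB with diameter `d ≥ 3` and `γ = d + 1`, and let
`x 0, x 1, …, x d` be a shortest path between vertices at distance `d`. Then
`W_{x 1, x 0} \ {x 1, …, x d}` contains exactly one vertex `u`, and this `u`
satisfies `d(u, x 1) = d(u, x 0) - 1` with `2 ≤ d(u, x 0) ≤ d`. -/
theorem stmt_1 {V : Type*} [Fintype V] (G : SimpleGraph V)
    (hconn : G.Connected) (d : ℕ) (hd : 3 ≤ d) (hdiam : HasDiam G d)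
    (hndb : IsNDB G (d + 1)) (x : ℕ → V)
    (hadj : ∀ i < d, G.Adj (x i) (x (i + 1)))
    (hgeo : G.dist (x 0) (x d) = d) :
    ∃ u : V,
      (∀ w : V, (w ∈ ndbW G (x 1) (x 0) ∧ ∀ i, 1 ≤ i → i ≤ d → w ≠ x i) ↔ w = u) ∧
      G.dist u (x 1) + 1 = G.dist u (x 0) ∧
      2 ≤ G.dist u (x 0) ∧ G.dist u (x 0) ≤ d := by
  classical
  -- chain inequality
  have hle : ∀ k i, i + k ≤ d → G.dist (x i) (x (i + k)) ≤ k := by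
    intro k
    induction k with
    | zero => intro i _; simp
    | succ k ih =>
      intro i h
      have h1 : G.dist (x i) (x (i + k)) ≤ k := ih i (by omega)
      have h2 : G.dist (x (i + k)) (x (i + k + 1)) = 1 :=
        SimpleGraph.dist_eq_one_iff_adj.mpr (hadj (i + k) (by omega))
      have := hconn.dist_triangle (u := x i) (v := x (i + k)) (w := x (i + k + 1))
      have : G.dist (x i) (x (i + k + 1)) ≤ k + 1 := by omega
      simpa [Nat.add_assoc] using this
  have hle' : ∀ i j, i ≤ j → j ≤ d → G.dist (x i) (x j) ≤ j - i := by
    intro i j hij hjd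
    have := hle (j - i) i (by omega)
    rwa [Nat.add_sub_cancel' hij] at this
  -- exact distances
  have hdist : ∀ i j, i ≤ j → j ≤ d → G.dist (x i) (x j) = j - i := by
    intro i j hij hjd
    have h1 := hle' 0 i (Nat.zero_le _) (by omega)
    have h2 := hle' i j hij hjd
    have h3 := hle' j d hjd le_rfl
    have t1 := hconn.dist_triangle (u := x 0) (v := x i) (w := x d)
    have t2 := hconn.dist_triangle (u := x i) (v := x j) (w := x d)
    omega
  have hdsymm : ∀ i j, i ≤ j → j ≤ d → G.dist (x j) (x i) = j - i := by
    intro i j hij hjd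
    rw [SimpleGraph.dist_comm]; exact hdist i j hij hjd
  -- the path vertices lie in W
  set W := ndbW G (x 1) (x 0) with hW
  have hmemW : ∀ w, w ∈ W ↔ G.dist w (x 1) < G.dist w (x 0) := by
    intro w; simp [hW, ndbW]
  have hsub : ∀ i, 1 ≤ i → i ≤ d → x i ∈ W := by
    intro i h1 h2
    rw [hmemW, hdsymm 1 i h1 h2, hdsymm 0 i (Nat.zero_le _) h2]
    omega
  -- injectivity
  have hinj : Set.InjOn x (Finset.Icc 1 d : Finset ℕ) := by
    intro i hi j hj hxy
    simp only [Finset.coe_Icc, Set.mem_Icc] at hi hj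
    rcases le_total i j with h | h
    · have := hdist i j h hj.2
      rw [hxy, (hconn.dist_eq_zero_iff (u := x j) (v := x j)).mpr rfl] at this
      omega
    · have := hdist j i h hi.2
      rw [hxy, (hconn.dist_eq_zero_iff (u := x j) (v := x j)).mpr rfl] at this
      omega
  set S := (Finset.Icc 1 d).image x with hS
  have hScard : S.card = d := by
    rw [hS, Finset.card_image_of_injOn hinj, Nat.card_Icc]; omega
  have hSsub : S ⊆ W := by
    intro w hw
    rw [hS, Finset.mem_image] at hw
    obtain ⟨i, hi, rfl⟩ := hw
    rw [Finset.mem_Icc] at hi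
    exact hsub i hi.1 hi.2
  have hWcard : W.card = d + 1 := (hndb (x 0) (x 1) (hadj 0 (by omega))).2
  have hdiff : (W \ S).card = 1 := by
    rw [Finset.card_sdiff_of_subset hSsub, hWcard, hScard]; omega
  obtain ⟨u, hu⟩ := Finset.card_eq_one.mp hdiff
  have hchar : ∀ w, (w ∈ W ∧ ∀ i, 1 ≤ i → i ≤ d → w ≠ x i) ↔ w = u := by
    intro w
    rw [← Finset.mem_singleton, ← hu, Finset.mem_sdiff]
    constructor
    · rintro ⟨h1, h2⟩
      refine ⟨h1, fun hmem => ?_⟩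
      rw [hS, Finset.mem_image] at hmem
      obtain ⟨i, hi, hxi⟩ := hmem
      rw [Finset.mem_Icc] at hi
      exact h2 i hi.1 hi.2 hxi.symm
    · rintro ⟨h1, h2⟩
      refine ⟨h1, fun i hi1 hi2 hw => ?_⟩
      exact h2 (by rw [hS, Finset.mem_image]; exact ⟨i, Finset.mem_Icc.mpr ⟨hi1, hi2⟩, hw.symm⟩)
  have huW : u ∈ W ∧ ∀ i, 1 ≤ i → i ≤ d → u ≠ x i := (hchar u).mpr rfl
  have hlt : G.dist u (x 1) < G.dist u (x 0) := (hmemW u).mp huW.1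
  have hne1 : u ≠ x 1 := huW.2 1 le_rfl (by omega)
  have hpos : 1 ≤ G.dist u (x 1) :=
    hconn.pos_dist_of_ne hne1
  have htri : G.dist u (x 0) ≤ G.dist u (x 1) + 1 := by
    have h01 : G.dist (x 1) (x 0) = 1 :=
      SimpleGraph.dist_eq_one_iff_adj.mpr (hadj 0 (by omega)).symm
    have := hconn.dist_triangle (u := u) (v := x 1) (w := x 0)
    omega
  exact ⟨u, hchar, by omega, by omega, hdiam.1 u (x 0)⟩
end

section
/- Let Γ be a nicely distance-balanced graph with diameter d ≥ 3 and γ(Γ) = d+1. Let x_0, x_1, …, x_d be a shortest path in Γ between two vertices x_0 and x_d at distance d, and set D^i_j = D^i_j(x_1,x_0). Then the vertex x_2 has at most one neighbour in D^1_1 ∪ D^2_1. -/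
open SimpleGraph Finset

/-- Let `Γ` be NDB with diameter `d ≥ 3` and `γ = d + 1`, and let
`x 0, x 1, …, x d` be a shortest path between vertices at distance `d`. Then the
vertex `x 2` has at most one neighbour in `D^1_1(x 1, x 0) ∪ D^2_1(x 1, x 0)`. -/
theorem stmt_3 {V : Type*} [Fintype V] [DecidableEq V] (G : SimpleGraph V)
    [DecidableRel G.Adj]
    (hconn : G.Connected) (d : ℕ) (hd : 3 ≤ d) (hdiam : HasDiam G d)
    (hndb : IsNDB G (d + 1)) (x : ℕ → V)
    (hadj : ∀ i < d, G.Adj (x i) (x (i + 1)))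
    (hgeo : G.dist (x 0) (x d) = d) :
    (G.neighborFinset (x 2) ∩ (ndbD G (x 1) (x 0) 1 1 ∪ ndbD G (x 1) (x 0) 2 1)).card ≤ 1 := by
  -- upper bound along the path
  have hub : ∀ n i : ℕ, i + n ≤ d → G.dist (x i) (x (i + n)) ≤ n := by
    intro n
    induction n with
    | zero => intro i _; simp [SimpleGraph.dist_self]
    | succ n ih =>
      intro i hi
      have h1 : G.dist (x i) (x (i + n)) ≤ n := ih i (by omega)
      have h2 : G.dist (x (i + n)) (x (i + n + 1)) = 1 :=
        SimpleGraph.dist_eq_one_iff_adj.mpr (hadj (i + n) (by omega))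
      have := hconn.dist_triangle (u := x i) (v := x (i + n)) (w := x (i + n + 1))
      have : G.dist (x i) (x (i + n + 1)) ≤ n + 1 := by omega
      simpa [Nat.add_assoc] using this
  have hub' : ∀ i j : ℕ, i ≤ j → j ≤ d → G.dist (x i) (x j) ≤ j - i := by
    intro i j hij hjd
    have := hub (j - i) i (by omega)
    have hrw : i + (j - i) = j := by omega
    rwa [hrw] at this
  -- exact distances along the path
  have hdist : ∀ i j : ℕ, i ≤ j → j ≤ d → G.dist (x i) (x j) = j - i := by
    intro i j hij hjd
    have ha : G.dist (x 0) (x i) ≤ i := hub' 0 i (by omega) (by omega)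
    have hb : G.dist (x i) (x j) ≤ j - i := hub' i j hij hjd
    have hc : G.dist (x j) (x d) ≤ d - j := hub' j d hjd le_rfl
    have t1 : G.dist (x 0) (x d) ≤ G.dist (x 0) (x i) + G.dist (x i) (x d) :=
      hconn.dist_triangle
    have t2 : G.dist (x i) (x d) ≤ G.dist (x i) (x j) + G.dist (x j) (x d) :=
      hconn.dist_triangle
    omega
  by_contra hcon
  push_neg at hcon
  obtain ⟨w, hw, w', hw', hne⟩ := Finset.one_lt_card.mp hcon
  -- basic facts about a neighbour in D11 ∪ D21
  have key : ∀ y : V, y ∈ (G.neighborFinset (x 2) ∩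
      (ndbD G (x 1) (x 0) 1 1 ∪ ndbD G (x 1) (x 0) 2 1)) →
      G.dist y (x 0) = 1 ∧ 1 ≤ G.dist y (x 1) ∧ G.dist y (x 2) = 1 := by
    intro y hy
    rw [Finset.mem_inter, SimpleGraph.mem_neighborFinset, Finset.mem_union] at hy
    obtain ⟨hadj2, hD⟩ := hy
    have h2 : G.dist y (x 2) = 1 := by
      rw [SimpleGraph.dist_comm]; exact SimpleGraph.dist_eq_one_iff_adj.mpr hadj2
    rcases hD with h | h <;>
      simp only [ndbD, Finset.mem_filter] at h <;>
      exact ⟨h.2.2, by omega, h2⟩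
  obtain ⟨hw0, hw1, hw2⟩ := key w hw
  obtain ⟨hw0', hw1', hw2'⟩ := key w' hw'
  -- the big finset inside W_{x (d-1), x d}
  set S : Finset V := ((Finset.range d).image x) ∪ {w, w'} with hS
  -- distances from such a neighbour to x (d-1) and x d
  have far : ∀ y : V, G.dist y (x 0) = 1 → G.dist y (x 2) = 1 →
      G.dist y (x (d - 1)) < G.dist y (x d) := by
    intro y hy0 hy2
    have e1 : G.dist (x 2) (x (d - 1)) = d - 3 := hdist 2 (d - 1) (by omega) (by omega)
    have e2 : G.dist (x 2) (x d) = d - 2 := hdist 2 d (by omega) le_rfl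
    have e3 : G.dist (x 0) (x (d - 1)) = d - 1 := hdist 0 (d - 1) (by omega) (by omega)
    have t1 : G.dist y (x (d - 1)) ≤ G.dist y (x 2) + G.dist (x 2) (x (d - 1)) :=
      hconn.dist_triangle
    have t2 : G.dist (x 0) (x d) ≤ G.dist (x 0) y + G.dist y (x d) :=
      hconn.dist_triangle
    have hc : G.dist (x 0) y = 1 := by rw [SimpleGraph.dist_comm]; exact hy0
    omega
  have hsub : S ⊆ ndbW G (x (d - 1)) (x d) := by
    intro y hy
    simp only [ndbW, Finset.mem_filter, Finset.mem_univ, true_and]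
    rw [hS, Finset.mem_union, Finset.mem_image] at hy
    rcases hy with ⟨j, hj, rfl⟩ | hy
    · rw [Finset.mem_range] at hj
      have e1 : G.dist (x j) (x (d - 1)) = d - 1 - j := by
        rcases le_or_gt j (d - 1) with h | h
        · exact hdist j (d - 1) h (by omega)
        · omega
      have e2 : G.dist (x j) (x d) = d - j := hdist j d (by omega) le_rfl
      omega
    · rw [Finset.mem_insert, Finset.mem_singleton] at hy
      rcases hy with rfl | rfl
      · exact far y hw0 hw2
      · exact far y hw0' hw2'
  -- cardinality of S
  have hnotmem : ∀ y : V, G.dist y (x 0) = 1 → 1 ≤ G.dist y (x 1) →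
      y ∉ (Finset.range d).image x := by
    intro y hy0 hy1 hmem
    rw [Finset.mem_image] at hmem
    obtain ⟨j, hj, rfl⟩ := hmem
    rw [Finset.mem_range] at hj
    rcases Nat.lt_or_ge j 2 with h | h
    · interval_cases j
      · simp [SimpleGraph.dist_self] at hy0
      · have : G.dist (x 1) (x 1) = 0 := SimpleGraph.dist_self
        omega
    · have : G.dist (x 0) (x j) = j := hdist 0 j (by omega) (by omega)
      rw [SimpleGraph.dist_comm] at this
      omega
  have hinj : Set.InjOn x (Finset.range d : Set ℕ) := by
    intro i hi j hj hij
    simp only [Finset.coe_range, Set.mem_Iio] at hi hj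
    have h1 : G.dist (x i) (x d) = d - i := hdist i d (by omega) le_rfl
    have h2 : G.dist (x j) (x d) = d - j := hdist j d (by omega) le_rfl
    rw [hij] at h1
    omega
  have hcardS : S.card = d + 2 := by
    rw [hS, Finset.card_union_of_disjoint, Finset.card_image_of_injOn hinj,
      Finset.card_range]
    · have : w ∉ ({w'} : Finset V) := by simp [hne]
      rw [Finset.card_insert_of_notMem this, Finset.card_singleton]
    · rw [Finset.disjoint_right]
      intro y hy
      rw [Finset.mem_insert, Finset.mem_singleton] at hy
      rcases hy with rfl | rfl
      · exact hnotmem y hw0 hw1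
      · exact hnotmem y hw0' hw1'
  -- NDB gives |W| = d + 1, contradiction
  have hadjd : G.Adj (x (d - 1)) (x d) := by
    have := hadj (d - 1) (by omega)
    have hr : d - 1 + 1 = d := by omega
    rwa [hr] at this
  have hW : (ndbW G (x (d - 1)) (x d)).card = d + 1 :=
    (hndb (x (d - 1)) (x d) hadjd).1
  have := Finset.card_le_card hsub
  omega
end

section
/- Let Γ be a regular nicely distance-balanced graph with valency k, diameter d ≥ 3 and γ(Γ) = d+1. Then k ∈ {3, 4, 5}. -/
open SimpleGraph Finset

set_option linter.unusedSectionVars false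
set_option linter.unusedVariables false
set_option maxHeartbeats 1000000

namespace NDBAux

variable {V : Type*} [Fintype V] [DecidableEq V] {G : SimpleGraph V} [DecidableRel G.Adj]

/-- common neighbours of `u` and `v` -/
noncomputable def Aset (G : SimpleGraph V) [DecidableRel G.Adj] (u v : V) : Finset V :=
  (G.neighborFinset u).filter fun z => G.Adj v z

/-- neighbours of `u` at distance 2 from `v` -/
noncomputable def Bset (G : SimpleGraph V) [DecidableRel G.Adj] (u v : V) : Finset V :=
  (G.neighborFinset u).filter fun z => G.dist z v = 2

/-- vertices at distance 2 from `u` and 3 from `v` -/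
noncomputable def Tset (G : SimpleGraph V) [DecidableRel G.Adj] (u v : V) : Finset V :=
  Finset.univ.filter fun z => G.dist z u = 2 ∧ G.dist z v = 3

/-- members of the common neighbourhood of `u,v` strictly closer to `a` than to `b` -/
noncomputable def Afar (G : SimpleGraph V) [DecidableRel G.Adj] (u v a b : V) : Finset V :=
  (Aset G u v).filter fun w => G.dist w a < G.dist w b

lemma mem_W {z u v : V} : z ∈ ndbW G u v ↔ G.dist z u < G.dist z v := by simp [ndbW]

lemma mem_W' {z u v : V} : z ∈ ndbW G u v ↔ G.dist u z < G.dist v z := by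
  rw [mem_W, SimpleGraph.dist_comm, SimpleGraph.dist_comm (G := G) (u := z) (v := v)]

lemma mem_Aset {u v z : V} : z ∈ Aset G u v ↔ G.Adj u z ∧ G.Adj v z := by
  simp [Aset, mem_filter, mem_neighborFinset]

lemma mem_Bset {u v z : V} : z ∈ Bset G u v ↔ G.Adj u z ∧ G.dist z v = 2 := by
  simp [Bset, mem_filter, mem_neighborFinset]

lemma mem_Tset {u v z : V} : z ∈ Tset G u v ↔ G.dist z u = 2 ∧ G.dist z v = 3 := by
  simp [Tset, mem_filter]

lemma mem_Afar {u v a b z : V} :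
    z ∈ Afar G u v a b ↔ (G.Adj u z ∧ G.Adj v z) ∧ G.dist z a < G.dist z b := by
  simp [Afar, mem_filter, mem_Aset]

lemma Aset_comm (u v : V) : Aset G u v = Aset G v u := by
  ext z
  simp only [Aset, mem_filter, mem_neighborFinset]
  tauto

lemma deg_split (hconn : G.Connected) {u v : V} (h : G.Adj u v) :
    (Aset G u v).card + (Bset G u v).card + 1 = G.degree u := by
  classical
  have huv1 : G.dist u v = 1 := dist_eq_one_iff_adj.mpr h
  have key : ∀ z ∈ G.neighborFinset u, G.dist z v ≤ 2 := by
    intro z hz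
    have hz' : G.Adj u z := (mem_neighborFinset _ _ _).mp hz
    have h1 : G.dist z u = 1 := dist_eq_one_iff_adj.mpr hz'.symm
    have h2 := hconn.dist_triangle (u := z) (v := u) (w := v)
    omega
  have hsplit := Finset.card_filter_add_card_filter_not
    (s := G.neighborFinset u) (p := fun z => G.dist z v = 0 ∨ G.dist z v = 1)
  have h01 : (G.neighborFinset u).filter (fun z => G.dist z v = 0 ∨ G.dist z v = 1)
      = insert v (Aset G u v) := by
    ext z
    simp only [mem_filter, mem_neighborFinset, mem_insert, mem_Aset]
    constructor
    · rintro ⟨hz, h0 | h1'⟩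
      · exact Or.inl (hconn.dist_eq_zero_iff.mp h0)
      · exact Or.inr ⟨hz, (dist_eq_one_iff_adj.mp h1').symm⟩
    · rintro (rfl | ⟨hz1, hz2⟩)
      · exact ⟨h, Or.inl (by simp [dist_self])⟩
      · exact ⟨hz1, Or.inr (dist_eq_one_iff_adj.mpr hz2.symm)⟩
  have h2' : (G.neighborFinset u).filter (fun z => ¬ (G.dist z v = 0 ∨ G.dist z v = 1))
      = Bset G u v := by
    ext z
    simp only [mem_filter, mem_neighborFinset, mem_Bset]
    constructor
    · rintro ⟨hz, hn⟩
      have := key z (by simpa [mem_neighborFinset] using hz)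
      exact ⟨hz, by omega⟩
    · rintro ⟨hz, h2⟩
      exact ⟨hz, by omega⟩
  have hv : v ∉ Aset G u v := by
    intro hv
    exact G.irrefl (mem_Aset.mp hv).2
  rw [h01, h2'] at hsplit
  rw [Finset.card_insert_of_notMem hv] at hsplit
  have hdeg : (G.neighborFinset u).card = G.degree u := G.card_neighborFinset_eq_degree u
  omega

lemma Tcard3 (hconn : G.Connected) (hd3 : ∀ a b : V, G.dist a b ≤ 3)
    (hndb : IsNDB G 4) {u v : V} (h : G.Adj u v) :
    (Tset G u v).card + G.degree u = (Aset G u v).card + 4 := by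
  classical
  have hW : (ndbW G u v).card = 4 := (hndb u v h).1
  have huv1 : G.dist u v = 1 := dist_eq_one_iff_adj.mpr h
  have hsplit : ndbW G u v = insert u (Bset G u v ∪ Tset G u v) := by
    ext z
    simp only [mem_W, mem_insert, mem_union, mem_Bset, mem_Tset]
    constructor
    · intro hz
      have htr := hconn.dist_triangle (u := z) (v := u) (w := v)
      have h3 : G.dist z v ≤ 3 := hd3 z v
      rcases Nat.lt_or_ge (G.dist z u) 1 with h0 | h1
      · left
        exact hconn.dist_eq_zero_iff.mp (by omega)
      · rcases Nat.lt_or_ge (G.dist z u) 2 with h1' | h2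
        · right; left
          have hz1 : G.dist z u = 1 := by omega
          exact ⟨(dist_eq_one_iff_adj.mp hz1).symm, by omega⟩
        · right; right
          exact ⟨by omega, by omega⟩
    · rintro (rfl | ⟨hz1, hz2⟩ | ⟨hz1, hz2⟩)
      · simp [dist_self, dist_eq_one_iff_adj.mpr h]
      · have : G.dist z u = 1 := dist_eq_one_iff_adj.mpr hz1.symm
        omega
      · omega
  have hu : u ∉ Bset G u v ∪ Tset G u v := by
    simp only [mem_union, mem_Bset, mem_Tset]
    rintro (⟨h1, _⟩ | ⟨h1, _⟩)
    · exact G.irrefl h1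
    · simp [dist_self] at h1
  have hBT : Disjoint (Bset G u v) (Tset G u v) := by
    rw [Finset.disjoint_left]
    intro z hz1 hz2
    have h1 : G.dist z u = 1 := dist_eq_one_iff_adj.mpr (mem_Bset.mp hz1).1.symm
    have h2 : G.dist z u = 2 := (mem_Tset.mp hz2).1
    omega
  rw [hsplit, Finset.card_insert_of_notMem hu, Finset.card_union_of_disjoint hBT] at hW
  have := deg_split hconn h
  omega

lemma exists_adj_dist (hconn : G.Connected) {a b : V} (h : G.dist a b ≠ 0) :
    ∃ y, G.Adj a y ∧ G.dist y b + 1 = G.dist a b := by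
  obtain ⟨q, hq⟩ := exists_walk_of_dist_ne_zero h
  have hlen : 0 < q.length := by omega
  have hadj : G.Adj a (q.getVert 1) := by
    have := q.adj_getVert_succ (i := 0) hlen
    simpa using this
  refine ⟨q.getVert 1, hadj, ?_⟩
  have hnil : ¬ q.Nil := Walk.not_nil_iff_lt_length.mpr hlen
  have htl : q.tail.length + 1 = q.length := Walk.length_tail_add_one hnil
  have hle : G.dist (q.getVert 1) b ≤ q.tail.length := dist_le q.tail
  have hge : G.dist a b ≤ G.dist a (q.getVert 1) + G.dist (q.getVert 1) b :=
    hconn.dist_triangle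
  have ha1 : G.dist a (q.getVert 1) = 1 := dist_eq_one_iff_adj.mpr hadj
  omega

section Geo

variable {d : ℕ} {x : ℕ → V}

lemma geo_adj (hx : ∀ s t, s ≤ t → t ≤ d → G.dist (x s) (x t) + s = t)
    {t : ℕ} (h : t + 1 ≤ d) : G.Adj (x t) (x (t + 1)) := by
  have := hx t (t + 1) (Nat.le_succ t) h
  exact dist_eq_one_iff_adj.mp (by omega)

lemma x_inj (hx : ∀ s t, s ≤ t → t ≤ d → G.dist (x s) (x t) + s = t)
    {a b : ℕ} (ha : a ≤ d) (hb : b ≤ d) (h : x a = x b) : a = b := by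
  rcases Nat.le_total a b with hab | hab
  · have := hx a b hab hb
    rw [h, dist_self] at this
    omega
  · have := hx b a hab ha
    rw [h, dist_self] at this
    omega

lemma chain_card (hx : ∀ s t, s ≤ t → t ≤ d → G.dist (x s) (x t) + s = t)
    {m : ℕ} (hm : m ≤ d) : (((Finset.range (m + 1)).image x)).card = m + 1 := by
  rw [Finset.card_image_of_injOn, Finset.card_range]
  intro a ha b hb hab
  simp only [Finset.coe_range, Set.mem_Iio] at ha hb
  exact x_inj hx (by omega) (by omega) hab

lemma chainW_top (hx : ∀ s t, s ≤ t → t ≤ d → G.dist (x s) (x t) + s = t)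
    {m : ℕ} (hm : m + 1 ≤ d) :
    ((Finset.range (m + 1)).image x) ⊆ ndbW G (x m) (x (m + 1)) := by
  intro z hz
  simp only [Finset.mem_image, Finset.mem_range] at hz
  obtain ⟨t, ht, rfl⟩ := hz
  have h1 := hx t m (by omega) (by omega)
  have h2 := hx t (m + 1) (by omega) hm
  exact mem_W.mpr (by omega)

lemma resid_card (hconn : G.Connected) (hndb : IsNDB G (d + 1))
    (hx : ∀ s t, s ≤ t → t ≤ d → G.dist (x s) (x t) + s = t)
    {m : ℕ} (hm : m + 1 ≤ d) :
    (ndbW G (x m) (x (m + 1)) \ ((Finset.range (m + 1)).image x)).card = d - m := by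
  rw [Finset.card_sdiff_of_subset (chainW_top hx hm), chain_card hx (by omega),
    (hndb (x m) (x (m + 1)) (geo_adj hx hm)).1]
  omega

lemma Afar_sub (hx : ∀ s t, s ≤ t → t ≤ d → G.dist (x s) (x t) + s = t)
    {m : ℕ} (hm : m + 1 ≤ d) :
    Afar G (x 0) (x 1) (x m) (x (m + 1)) ⊆
      ndbW G (x m) (x (m + 1)) \ ((Finset.range (m + 1)).image x) := by
  intro w hw
  obtain ⟨⟨h0w, h1w⟩, hfar⟩ := mem_Afar.mp hw
  rw [Finset.mem_sdiff]
  refine ⟨mem_W.mpr hfar, ?_⟩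
  intro hmem
  simp only [Finset.mem_image, Finset.mem_range] at hmem
  obtain ⟨t, ht, rfl⟩ := hmem
  have h1 : G.dist (x 0) (x t) = 1 := dist_eq_one_iff_adj.mpr h0w
  have h2 := hx 0 t (Nat.zero_le t) (by omega)
  have ht1 : t = 1 := by omega
  subst ht1
  exact G.irrefl h1w

lemma Afar_card (hconn : G.Connected) (hndb : IsNDB G (d + 1))
    (hx : ∀ s t, s ≤ t → t ≤ d → G.dist (x s) (x t) + s = t)
    {m : ℕ} (hm : m + 1 ≤ d) :
    (Afar G (x 0) (x 1) (x m) (x (m + 1))).card ≤ d - m := by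
  calc (Afar G (x 0) (x 1) (x m) (x (m + 1))).card
      ≤ (ndbW G (x m) (x (m + 1)) \ ((Finset.range (m + 1)).image x)).card :=
        Finset.card_le_card (Afar_sub hx hm)
    _ = d - m := resid_card hconn hndb hx hm

lemma Acover (hconn : G.Connected) (hd : 3 ≤ d)
    (hx : ∀ s t, s ≤ t → t ≤ d → G.dist (x s) (x t) + s = t) :
    Aset G (x 0) (x 1) ⊆
      Afar G (x 0) (x 1) (x (d - 1)) (x d) ∪ Afar G (x 0) (x 1) (x (d - 2)) (x (d - 1)) := by
  intro w hw
  obtain ⟨h0w, h1w⟩ := mem_Aset.mp hw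
  rw [Finset.mem_union]
  by_cases h2 : G.dist w (x (d - 2)) < G.dist w (x (d - 1))
  · exact Or.inr (mem_Afar.mpr ⟨⟨h0w, h1w⟩, h2⟩)
  · left
    refine mem_Afar.mpr ⟨⟨h0w, h1w⟩, ?_⟩
    have hw1 : G.dist w (x 1) = 1 := by
      rw [SimpleGraph.dist_comm]; exact dist_eq_one_iff_adj.mpr h1w
    have ht1 : G.dist w (x (d - 2)) ≤ G.dist w (x 1) + G.dist (x 1) (x (d - 2)) :=
      hconn.dist_triangle
    have h1d2 := hx 1 (d - 2) (by omega) (by omega)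
    have h0d := hx 0 d (Nat.zero_le d) le_rfl
    have ht2 : G.dist (x 0) (x d) ≤ G.dist (x 0) w + G.dist w (x d) := hconn.dist_triangle
    have hw0' : G.dist (x 0) w = 1 := dist_eq_one_iff_adj.mpr h0w
    omega

lemma lam_le_three (hconn : G.Connected) (hndb : IsNDB G (d + 1)) (hd : 3 ≤ d)
    (hx : ∀ s t, s ≤ t → t ≤ d → G.dist (x s) (x t) + s = t) :
    (Aset G (x 0) (x 1)).card ≤ 3 := by
  have h1 : (Afar G (x 0) (x 1) (x (d - 1)) (x d)).card ≤ 1 := by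
    have h := Afar_card hconn hndb hx (m := d - 1) (by omega)
    have he : d - 1 + 1 = d := by omega
    rw [he] at h
    omega
  have h2 : (Afar G (x 0) (x 1) (x (d - 2)) (x (d - 1))).card ≤ 2 := by
    have h := Afar_card hconn hndb hx (m := d - 2) (by omega)
    have he : d - 2 + 1 = d - 1 := by omega
    rw [he] at h
    omega
  calc (Aset G (x 0) (x 1)).card
      ≤ (Afar G (x 0) (x 1) (x (d - 1)) (x d) ∪
          Afar G (x 0) (x 1) (x (d - 2)) (x (d - 1))).card :=
        Finset.card_le_card (Acover hconn hd hx)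
    _ ≤ _ := Finset.card_union_le _ _
    _ ≤ 3 := by omega

lemma Bx_le_two (hconn : G.Connected) (hndb : IsNDB G (d + 1)) (hd : 3 ≤ d)
    (hx : ∀ s t, s ≤ t → t ≤ d → G.dist (x s) (x t) + s = t) :
    (Bset G (x 1) (x 0)).card ≤ 2 := by
  classical
  set S := (Finset.Icc 1 d).image x with hS
  have hScard : S.card = d := by
    rw [hS, Finset.card_image_of_injOn, Nat.card_Icc]
    · omega
    · intro a ha b hb hab
      simp only [Finset.coe_Icc, Set.mem_Icc] at ha hb
      exact x_inj hx ha.2 hb.2 hab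
  have hSW : S ⊆ ndbW G (x 1) (x 0) := by
    intro z hz
    simp only [hS, Finset.mem_image, Finset.mem_Icc] at hz
    obtain ⟨t, ⟨ht1, htd⟩, rfl⟩ := hz
    have h1 := hx 1 t ht1 htd
    have h0 := hx 0 t (Nat.zero_le t) htd
    exact mem_W'.mpr (by omega)
  have hWcard : (ndbW G (x 1) (x 0)).card = d + 1 :=
    (hndb (x 0) (x 1) (geo_adj hx (by omega))).2
  have hsub : Bset G (x 1) (x 0) \ {x 2} ⊆ ndbW G (x 1) (x 0) \ S := by
    intro z hz
    rw [Finset.mem_sdiff] at hz ⊢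
    obtain ⟨hzB, hz2⟩ := hz
    obtain ⟨hadj, hzd⟩ := mem_Bset.mp hzB
    have hz1 : G.dist z (x 1) = 1 := by
      rw [SimpleGraph.dist_comm]; exact dist_eq_one_iff_adj.mpr hadj
    refine ⟨mem_W.mpr (by omega), ?_⟩
    intro hzS
    simp only [hS, Finset.mem_image, Finset.mem_Icc] at hzS
    obtain ⟨t, ⟨ht1, htd⟩, rfl⟩ := hzS
    have h0 := hx 0 t (Nat.zero_le t) htd
    rw [SimpleGraph.dist_comm] at hzd
    have ht2 : t = 2 := by omega
    subst ht2
    simp at hz2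
  have h1 : (ndbW G (x 1) (x 0) \ S).card = 1 := by
    rw [Finset.card_sdiff_of_subset hSW, hWcard, hScard]; omega
  have h2 : (Bset G (x 1) (x 0) \ {x 2}).card ≤ 1 :=
    le_trans (Finset.card_le_card hsub) h1.le
  have h3 : (Bset G (x 1) (x 0)).card
      ≤ (Bset G (x 1) (x 0) \ {x 2}).card + ({x 2} : Finset V).card :=
    Finset.card_le_card_sdiff_add_card
  simp only [Finset.card_singleton] at h3
  omega

lemma k_ge_3 (hconn : G.Connected) (hndb : IsNDB G (d + 1)) {k : ℕ}
    (hreg : G.IsRegularOfDegree k) (hd : 3 ≤ d) (hub : ∀ u v : V, G.dist u v ≤ d)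
    (hx : ∀ s t, s ≤ t → t ≤ d → G.dist (x s) (x t) + s = t) : 3 ≤ k := by
  classical
  set S := (Finset.Icc 1 d).image x with hS
  have hScard : S.card = d := by
    rw [hS, Finset.card_image_of_injOn, Nat.card_Icc]
    · omega
    · intro a ha b hb hab
      simp only [Finset.coe_Icc, Set.mem_Icc] at ha hb
      exact x_inj hx ha.2 hb.2 hab
  have hSW : S ⊆ ndbW G (x 1) (x 0) := by
    intro z hz
    simp only [hS, Finset.mem_image, Finset.mem_Icc] at hz
    obtain ⟨t, ⟨ht1, htd⟩, rfl⟩ := hz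
    have h1 := hx 1 t ht1 htd
    have h0 := hx 0 t (Nat.zero_le t) htd
    exact mem_W'.mpr (by omega)
  have hWcard : (ndbW G (x 1) (x 0)).card = d + 1 :=
    (hndb (x 0) (x 1) (geo_adj hx (by omega))).2
  have hres : (ndbW G (x 1) (x 0) \ S).card = 1 := by
    rw [Finset.card_sdiff_of_subset hSW, hWcard, hScard]; omega
  obtain ⟨e, he⟩ := Finset.card_eq_one.mp hres
  have he' : e ∈ ndbW G (x 1) (x 0) \ S := he ▸ Finset.mem_singleton_self e
  have heW : e ∈ ndbW G (x 1) (x 0) := (Finset.mem_sdiff.mp he').1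
  have heS : e ∉ S := (Finset.mem_sdiff.mp he').2
  have hlt : G.dist e (x 1) < G.dist e (x 0) := mem_W.mp heW
  have h10 : G.dist (x 1) (x 0) = 1 := by
    rw [SimpleGraph.dist_comm]
    have := hx 0 1 (by omega) (by omega); omega
  have htr : G.dist e (x 0) ≤ G.dist e (x 1) + 1 := by
    have := hconn.dist_triangle (u := e) (v := x 1) (w := x 0)
    omega
  have he0 : G.dist e (x 0) = G.dist e (x 1) + 1 := by omega
  have hj0 : G.dist e (x 1) ≠ 0 := by
    intro h0
    apply heS
    have he1 : e = x 1 := hconn.dist_eq_zero_iff.mp h0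
    rw [hS, Finset.mem_image]
    exact ⟨1, by simp [Finset.mem_Icc]; omega, he1.symm⟩
  obtain ⟨y, hey, hyd⟩ := exists_adj_dist hconn hj0
  have heyd : G.dist e y = 1 := dist_eq_one_iff_adj.mpr hey
  have hy0 : G.dist e (x 0) ≤ G.dist e y + G.dist y (x 0) := hconn.dist_triangle
  have hyW : y ∈ ndbW G (x 1) (x 0) := mem_W.mpr (by omega)
  have hWeq : S ∪ {e} = ndbW G (x 1) (x 0) := by
    apply Finset.eq_of_subset_of_card_le
    · exact Finset.union_subset hSW (by simp [heW])
    · rw [Finset.card_union_of_disjoint (Finset.disjoint_singleton_right.mpr heS)]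
      simp [hScard, hWcard]
  have hy' : y ∈ S ∪ {e} := by rw [hWeq]; exact hyW
  have hyne : y ≠ e := fun h => G.irrefl (h ▸ hey)
  have hyS : y ∈ S := by
    rcases Finset.mem_union.mp hy' with h | h
    · exact h
    · simp at h; exact absurd h hyne
  rw [hS, Finset.mem_image] at hyS
  obtain ⟨t, htmem, hty⟩ := hyS
  rw [Finset.mem_Icc] at htmem
  obtain ⟨ht1, htd⟩ := htmem
  subst hty
  have h1t := hx 1 t ht1 htd
  have h1t' : G.dist (x t) (x 1) + 1 = t := by rw [SimpleGraph.dist_comm]; omega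
  have htj : t = G.dist e (x 1) := by omega
  -- now e is adjacent to x t, with t ≥ 1, t + 1 ≤ d
  have hjd : t + 1 ≤ d := by
    have := hub e (x 0); omega
  have hmem : ({x (t - 1), x (t + 1), e} : Finset V) ⊆ G.neighborFinset (x t) := by
    intro z hz
    simp only [Finset.mem_insert, Finset.mem_singleton] at hz
    rw [mem_neighborFinset]
    rcases hz with rfl | rfl | rfl
    · have hadj := geo_adj hx (t := t - 1) (by omega)
      have hidx : t - 1 + 1 = t := by omega
      rw [hidx] at hadj
      exact hadj.symm
    · exact geo_adj hx hjd
    · exact hey.symm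
  have hne1 : x (t - 1) ≠ x (t + 1) := by
    intro h
    have := x_inj hx (by omega) (by omega) h
    omega
  have hne2 : x (t - 1) ≠ e := by
    intro h
    have h1 := hx 0 (t - 1) (by omega) (by omega)
    rw [h, SimpleGraph.dist_comm] at h1
    omega
  have hne3 : x (t + 1) ≠ e := by
    intro h
    apply heS
    rw [hS, Finset.mem_image]
    exact ⟨t + 1, by simp [Finset.mem_Icc]; omega, h⟩
  have hcard : ({x (t - 1), x (t + 1), e} : Finset V).card = 3 := by
    rw [Finset.card_insert_of_notMem (by simp [hne1, hne2]),
      Finset.card_insert_of_notMem (by simp [hne3]), Finset.card_singleton]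
  have hle := Finset.card_le_card hmem
  rw [hcard, G.card_neighborFinset_eq_degree, hreg] at hle
  exact hle

lemma kill_ge4 (hconn : G.Connected) (hndb : IsNDB G (d + 1)) {k : ℕ}
    (hreg : G.IsRegularOfDegree k) (hd4 : 4 ≤ d) (hk : 6 ≤ k)
    (hx : ∀ s t, s ≤ t → t ≤ d → G.dist (x s) (x t) + s = t) : False := by
  classical
  have hidx : d - 1 + 1 = d := by omega
  have hlam_le := lam_le_three hconn hndb (by omega) hx
  have hds := deg_split hconn (show G.Adj (x 1) (x 0) from (geo_adj hx (by omega)).symm)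
  have hB := Bx_le_two hconn hndb (by omega) hx
  rw [Aset_comm, hreg (x 1)] at hds
  have hlam : (Aset G (x 0) (x 1)).card = 3 := by omega
  have hA2card : (Afar G (x 0) (x 1) (x (d - 2)) (x (d - 1))).card ≤ 2 := by
    have h := Afar_card hconn hndb hx (m := d - 2) (by omega)
    have he : d - 2 + 1 = d - 1 := by omega
    rw [he] at h
    omega
  have hwex : ∃ w, w ∈ Afar G (x 0) (x 1) (x (d - 1)) (x d) := by
    by_contra hcon
    push_neg at hcon
    have hemp : Afar G (x 0) (x 1) (x (d - 1)) (x d) = ∅ :=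
      Finset.eq_empty_iff_forall_notMem.mpr hcon
    have := Finset.card_le_card (Acover hconn (by omega) hx)
    rw [hemp] at this
    simp only [Finset.empty_union] at this
    omega
  obtain ⟨w, hwA⟩ := hwex
  have hwA' : w ∈ Afar G (x 0) (x 1) (x (d - 1)) (x (d - 1 + 1)) := by
    rw [hidx]; exact hwA
  have hwR := Afar_sub hx (m := d - 1) (by omega) hwA'
  -- reversed geodesic
  set y : ℕ → V := fun t => x (d - t) with hy_def
  have hy : ∀ s t, s ≤ t → t ≤ d → G.dist (y s) (y t) + s = t := by
    intro s t hst htd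
    have h := hx (d - t) (d - s) (by omega) (by omega)
    rw [SimpleGraph.dist_comm] at h
    simp only [hy_def]
    omega
  have hrev := lam_le_three hconn hndb (by omega) hy
  have hy0 : y 0 = x d := by simp [hy_def]
  have hy1 : y 1 = x (d - 1) := by simp [hy_def]
  rw [hy0, hy1] at hrev
  have hadj_top : G.Adj (x (d - 1)) (x d) := by
    have h := geo_adj hx (t := d - 1) (by omega)
    rwa [hidx] at h
  have hds2 := deg_split hconn hadj_top
  rw [hreg (x (d - 1)), Aset_comm] at hds2
  have hBcard : 2 ≤ (Bset G (x (d - 1)) (x d)).card := by omega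
  have hBex : ∃ e ∈ Bset G (x (d - 1)) (x d), e ≠ x (d - 2) := by
    by_contra hcon
    push_neg at hcon
    have hsub : Bset G (x (d - 1)) (x d) ⊆ {x (d - 2)} := fun z hz =>
      Finset.mem_singleton.mpr (hcon z hz)
    have := Finset.card_le_card hsub
    simp at this
    omega
  obtain ⟨e, heB, hene⟩ := hBex
  obtain ⟨heAdj, heD⟩ := mem_Bset.mp heB
  have heD1 : G.dist e (x (d - 1)) = 1 := by
    rw [SimpleGraph.dist_comm]; exact dist_eq_one_iff_adj.mpr heAdj
  have heW : e ∈ ndbW G (x (d - 1)) (x (d - 1 + 1)) := by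
    rw [hidx]; exact mem_W.mpr (by omega)
  have heS : e ∉ (Finset.range (d - 1 + 1)).image x := by
    intro hmem
    simp only [Finset.mem_image, Finset.mem_range] at hmem
    obtain ⟨t, ht, rfl⟩ := hmem
    have h1 := hx t (d - 1) (by omega) (by omega)
    have ht2 : t = d - 2 := by omega
    exact hene (by rw [ht2])
  have heR : e ∈ ndbW G (x (d - 1)) (x (d - 1 + 1)) \ (Finset.range (d - 1 + 1)).image x :=
    Finset.mem_sdiff.mpr ⟨heW, heS⟩
  have hres := resid_card hconn hndb hx (m := d - 1) (by omega)
  have hcard1 : (ndbW G (x (d - 1)) (x (d - 1 + 1)) \ (Finset.range (d - 1 + 1)).image x).card ≤ 1 := by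
    rw [hres]; omega
  have hew : e = w := Finset.card_le_one.mp hcard1 e heR w hwR
  -- contradiction
  have hwAdj : G.Adj (x 0) w := (mem_Afar.mp hwA).1.1
  have hfar : d - 1 ≤ 1 + G.dist w (x (d - 1)) := by
    have h0d1 := hx 0 (d - 1) (by omega) (by omega)
    have htr := hconn.dist_triangle (u := x 0) (v := w) (w := x (d - 1))
    have hw0 : G.dist (x 0) w = 1 := dist_eq_one_iff_adj.mpr hwAdj
    omega
  rw [hew] at heD1
  omega

end Geo

def quad (a b c e : V) : ℕ → V := fun t =>
  if t = 0 then a else if t = 1 then b else if t = 2 then c else e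

lemma quad_h {a b c e : V}
    (h01 : G.dist a b = 1) (h02 : G.dist a c = 2) (h03 : G.dist a e = 3)
    (h12 : G.dist b c = 1) (h13 : G.dist b e = 2) (h23 : G.dist c e = 1) :
    ∀ s t, s ≤ t → t ≤ 3 → G.dist (quad a b c e s) (quad a b c e t) + s = t := by
  intro s t hst ht
  interval_cases t <;> interval_cases s <;>
    simp +decide only [quad, dist_self, if_true, if_false] <;> omega

lemma d3_lam (hconn : G.Connected) (hd3 : ∀ a b : V, G.dist a b ≤ 3) (hndb : IsNDB G 4)
    {k : ℕ} (hreg : G.IsRegularOfDegree k) (hk6 : k = 6)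
    {x : ℕ → V} (hx : ∀ s t, s ≤ t → t ≤ 3 → G.dist (x s) (x t) + s = t) :
    (Aset G (x 0) (x 1)).card = 3 := by
  have hndb' : IsNDB G (3 + 1) := hndb
  have hle : (Aset G (x 0) (x 1)).card ≤ 3 :=
    lam_le_three (d := 3) hconn hndb' le_rfl hx
  have hadj10 : G.Adj (x 1) (x 0) := (geo_adj (d := 3) hx (by omega)).symm
  have hT := Tcard3 hconn hd3 hndb hadj10
  have hx3 : x 3 ∈ Tset G (x 1) (x 0) := by
    rw [mem_Tset]
    have h13 := hx 1 3 (by omega) (by omega)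
    have h03 := hx 0 3 (by omega) (by omega)
    constructor <;> rw [SimpleGraph.dist_comm] <;> omega
  have hT1 : 1 ≤ (Tset G (x 1) (x 0)).card := Finset.card_pos.mpr ⟨_, hx3⟩
  have hdeg : G.degree (x 1) = 6 := by rw [hreg (x 1), hk6]
  rw [Aset_comm, hdeg] at hT
  omega

lemma d3_middle (hconn : G.Connected) (hd3 : ∀ a b : V, G.dist a b ≤ 3) (hndb : IsNDB G 4)
    {k : ℕ} (hreg : G.IsRegularOfDegree k) (hk6 : k = 6)
    {x : ℕ → V} (hx : ∀ s t, s ≤ t → t ≤ 3 → G.dist (x s) (x t) + s = t) :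
    (Tset G (x 1) (x 2)).card = 0 ∧ (Tset G (x 2) (x 1)).card = 0 ∧
    (Tset G (x 2) (x 3)).card = 1 ∧ (Tset G (x 0) (x 1)).card = 1 := by
  classical
  have hndb' : IsNDB G (3 + 1) := hndb
  have hlam01 : (Aset G (x 0) (x 1)).card = 3 := d3_lam hconn hd3 hndb hreg hk6 hx
  have h01 := hx 0 1 (by omega) (by omega)
  have h02 := hx 0 2 (by omega) (by omega)
  have h03 := hx 0 3 (by omega) (by omega)
  have h12 := hx 1 2 (by omega) (by omega)
  have h13 := hx 1 3 (by omega) (by omega)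
  have h23 := hx 2 3 (by omega) (by omega)
  have hadj01 : G.Adj (x 0) (x 1) := geo_adj (d := 3) hx (by omega)
  have hadj12 : G.Adj (x 1) (x 2) := geo_adj (d := 3) hx (by omega)
  have hadj23 : G.Adj (x 2) (x 3) := geo_adj (d := 3) hx (by omega)
  -- Afar (x 2) (x 3) has at most one element
  have hA1 : (Afar G (x 0) (x 1) (x 2) (x 3)).card ≤ 1 := by
    have h := Afar_card (d := 3) hconn hndb' hx (m := 2) (by omega)
    simpa using h
  -- elements of Aset outside Afar are in Bset (x 1) (x 2)
  have hsub : insert (x 0) (Aset G (x 0) (x 1) \ Afar G (x 0) (x 1) (x 2) (x 3))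
      ⊆ Bset G (x 1) (x 2) := by
    intro z hz
    rw [Finset.mem_insert] at hz
    rcases hz with rfl | hz
    · rw [mem_Bset]
      refine ⟨hadj01.symm, ?_⟩
      omega
    · rw [Finset.mem_sdiff] at hz
      obtain ⟨hzA, hzF⟩ := hz
      obtain ⟨h0z, h1z⟩ := mem_Aset.mp hzA
      rw [mem_Bset]
      refine ⟨h1z, ?_⟩
      have hnf : ¬ G.dist z (x 2) < G.dist z (x 3) := fun hc => hzF (mem_Afar.mpr ⟨⟨h0z, h1z⟩, hc⟩)
      have hz1 : G.dist z (x 1) = 1 := by rw [SimpleGraph.dist_comm]; exact dist_eq_one_iff_adj.mpr h1z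
      have htr1 : G.dist z (x 2) ≤ G.dist z (x 1) + G.dist (x 1) (x 2) := hconn.dist_triangle
      have htr2 : G.dist (x 0) (x 3) ≤ G.dist (x 0) z + G.dist z (x 3) := hconn.dist_triangle
      have hz0 : G.dist (x 0) z = 1 := dist_eq_one_iff_adj.mpr h0z
      omega
  have hx0nA : x 0 ∉ Aset G (x 0) (x 1) \ Afar G (x 0) (x 1) (x 2) (x 3) := by
    intro h
    exact G.irrefl (mem_Aset.mp (Finset.mem_sdiff.mp h).1).1
  have hAfsub : Afar G (x 0) (x 1) (x 2) (x 3) ⊆ Aset G (x 0) (x 1) :=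
    Finset.filter_subset _ _
  have hBge : 3 ≤ (Bset G (x 1) (x 2)).card := by
    have hc := Finset.card_le_card hsub
    rw [Finset.card_insert_of_notMem hx0nA, Finset.card_sdiff_of_subset hAfsub] at hc
    omega
  have hds12 := deg_split hconn hadj12
  rw [hreg (x 1), hk6] at hds12
  have hT12' := Tcard3 hconn hd3 hndb hadj12
  rw [hreg (x 1), hk6] at hT12'
  have hT12 : (Tset G (x 1) (x 2)).card = 0 := by omega
  have hlam12 : (Aset G (x 1) (x 2)).card = 2 := by omega
  have hT21' := Tcard3 hconn hd3 hndb hadj12.symm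
  rw [hreg (x 2), hk6, Aset_comm] at hT21'
  have hT21 : (Tset G (x 2) (x 1)).card = 0 := by omega
  -- reversed quadruple
  have hy := quad_h (G := G) (a := x 3) (b := x 2) (c := x 1) (e := x 0)
    (by rw [SimpleGraph.dist_comm]; omega) (by rw [SimpleGraph.dist_comm]; omega) (by rw [SimpleGraph.dist_comm]; omega)
    (by rw [SimpleGraph.dist_comm]; omega) (by rw [SimpleGraph.dist_comm]; omega) (by rw [SimpleGraph.dist_comm]; omega)
  have hlam32 := d3_lam hconn hd3 hndb hreg hk6 hy
  have hq0 : quad (x 3) (x 2) (x 1) (x 0) 0 = x 3 := rfl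
  have hq1 : quad (x 3) (x 2) (x 1) (x 0) 1 = x 2 := rfl
  rw [hq0, hq1] at hlam32
  have hT23' := Tcard3 hconn hd3 hndb hadj23
  rw [hreg (x 2), hk6, Aset_comm, hlam32] at hT23'
  have hT01' := Tcard3 hconn hd3 hndb hadj01
  rw [hreg (x 0), hk6, hlam01] at hT01'
  exact ⟨hT12, hT21, by omega, by omega⟩

lemma d3_kill (hconn : G.Connected) (hd3 : ∀ a b : V, G.dist a b ≤ 3) (hndb : IsNDB G 4)
    {k : ℕ} (hreg : G.IsRegularOfDegree k) (hk6 : k = 6)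
    {x : ℕ → V} (hx : ∀ s t, s ≤ t → t ≤ 3 → G.dist (x s) (x t) + s = t) : False := by
  classical
  obtain ⟨hT12, hT21, hT23, hT01⟩ := d3_middle hconn hd3 hndb hreg hk6 hx
  have h01 := hx 0 1 (by omega) (by omega)
  have h02 := hx 0 2 (by omega) (by omega)
  have h03 := hx 0 3 (by omega) (by omega)
  have h12 := hx 1 2 (by omega) (by omega)
  have h13 := hx 1 3 (by omega) (by omega)
  have h23 := hx 2 3 (by omega) (by omega)
  -- the vertex z at distance (2,3) from (x 0, x 1)
  obtain ⟨z, hz⟩ := Finset.card_eq_one.mp hT01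
  have hzmem : z ∈ Tset G (x 0) (x 1) := hz ▸ Finset.mem_singleton_self z
  obtain ⟨hz0, hz1⟩ := mem_Tset.mp hzmem
  -- midpoint p between z and x 0
  obtain ⟨p, hzp, hp0⟩ := exists_adj_dist hconn (show G.dist z (x 0) ≠ 0 by omega)
  have hp0' : G.dist p (x 0) = 1 := by omega
  have hpz : G.dist p z = 1 := by rw [SimpleGraph.dist_comm]; exact dist_eq_one_iff_adj.mpr hzp
  -- distances for the quadruple (x 1, x 0, p, z)
  have d01 : G.dist (x 1) (x 0) = 1 := by rw [SimpleGraph.dist_comm]; omega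
  have d12 : G.dist (x 0) p = 1 := by rw [SimpleGraph.dist_comm]; exact hp0'
  have d13 : G.dist (x 0) z = 2 := by rw [SimpleGraph.dist_comm]; exact hz0
  have d03 : G.dist (x 1) z = 3 := by rw [SimpleGraph.dist_comm]; exact hz1
  have d23 : G.dist p z = 1 := hpz
  have d02 : G.dist (x 1) p = 2 := by
    have htr1 : G.dist (x 1) p ≤ G.dist (x 1) (x 0) + G.dist (x 0) p := hconn.dist_triangle
    have htr2 : G.dist (x 1) z ≤ G.dist (x 1) p + G.dist p z := hconn.dist_triangle
    omega
  have hg' := quad_h (G := G) d01 d02 d03 d12 d13 d23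
  obtain ⟨hT12', hT21', _, _⟩ := d3_middle hconn hd3 hndb hreg hk6 hg'
  have hq1 : quad (x 1) (x 0) p z 1 = x 0 := rfl
  have hq2 : quad (x 1) (x 0) p z 2 = p := rfl
  rw [hq1, hq2] at hT12' hT21'
  -- hT12' : (Tset G (x 0) p).card = 0, hT21' : (Tset G p (x 0)).card = 0
  have h3p : G.dist (x 3) p = 3 := by
    have hne2 : G.dist (x 3) p ≠ 2 := by
      intro hc
      have : x 3 ∈ Tset G p (x 0) := mem_Tset.mpr ⟨hc, by rw [SimpleGraph.dist_comm]; omega⟩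
      have := Finset.card_pos.mpr ⟨_, this⟩
      omega
    have htr : G.dist (x 3) (x 0) ≤ G.dist (x 3) p + G.dist p (x 0) := hconn.dist_triangle
    have hle := hd3 (x 3) p
    rw [SimpleGraph.dist_comm (u := x 3) (v := x 0)] at htr
    omega
  have hp2 : G.dist p (x 2) = 2 := by
    have hge : 2 ≤ G.dist p (x 2) := by
      have htr : G.dist (x 3) p ≤ G.dist (x 3) (x 2) + G.dist (x 2) p := hconn.dist_triangle
      have h32 : G.dist (x 3) (x 2) = 1 := by rw [SimpleGraph.dist_comm]; omega
      rw [SimpleGraph.dist_comm (u := x 2) (v := p)] at htr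
      omega
    have hne3 : G.dist p (x 2) ≠ 3 := by
      intro hc
      have : p ∈ Tset G (x 1) (x 2) := mem_Tset.mpr ⟨by rw [SimpleGraph.dist_comm]; exact d02, hc⟩
      have := Finset.card_pos.mpr ⟨_, this⟩
      omega
    have hle := hd3 p (x 2)
    omega
  -- p and x 0 both lie in Tset G (x 2) (x 3), which is a singleton
  obtain ⟨s, hs⟩ := Finset.card_eq_one.mp hT23
  have hp_mem : p ∈ Tset G (x 2) (x 3) := mem_Tset.mpr ⟨hp2,
    by rw [SimpleGraph.dist_comm]; exact h3p⟩
  have hx0_mem : x 0 ∈ Tset G (x 2) (x 3) := mem_Tset.mpr ⟨by omega, by omega⟩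
  rw [hs, Finset.mem_singleton] at hp_mem hx0_mem
  rw [hp_mem, ← hx0_mem] at hp0'
  rw [SimpleGraph.dist_self] at hp0'
  omega

end NDBAux

/-- A regular NDB graph with valency `k`, diameter `d ≥ 3` and
`γ = d + 1` has `k ∈ {3, 4, 5}`. -/
theorem stmt_4 {V : Type*} [Fintype V] (G : SimpleGraph V) [DecidableRel G.Adj]
    (hconn : G.Connected) (k d : ℕ) (hreg : G.IsRegularOfDegree k)
    (hd : 3 ≤ d) (hdiam : HasDiam G d) (hndb : IsNDB G (d + 1)) :
    k = 3 ∨ k = 4 ∨ k = 5 := by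
  classical
  open NDBAux in
  obtain ⟨hub, u0, v0, huv⟩ := hdiam
  have hdne : G.dist u0 v0 ≠ 0 := by omega
  obtain ⟨p, hp⟩ := SimpleGraph.exists_walk_of_dist_ne_zero hdne
  rw [huv] at hp
  set x : ℕ → V := p.getVert with hxdef
  have hx0 : x 0 = u0 := p.getVert_zero
  have hxd : x d = v0 := by
    rw [hxdef, ← hp]
    exact p.getVert_length
  have hxle : ∀ s n, s + n ≤ d → G.dist (x s) (x (s + n)) ≤ n := by
    intro s n
    induction n with
    | zero => intro _; simp [dist_self]
    | succ m ih =>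
      intro hsm
      have htr : G.dist (x s) (x (s + m + 1)) ≤
          G.dist (x s) (x (s + m)) + G.dist (x (s + m)) (x (s + m + 1)) := hconn.dist_triangle
      have hadj : G.Adj (x (s + m)) (x (s + m + 1)) := by
        apply p.adj_getVert_succ
        omega
      have h1 : G.dist (x (s + m)) (x (s + m + 1)) = 1 := dist_eq_one_iff_adj.mpr hadj
      have h2 := ih (by omega)
      calc G.dist (x s) (x (s + (m + 1))) = G.dist (x s) (x (s + m + 1)) := by ring_nf
        _ ≤ m + 1 := by omega
  have hx : ∀ s t, s ≤ t → t ≤ d → G.dist (x s) (x t) + s = t := by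
    intro s t hst htd
    have h1 : G.dist (x s) (x t) ≤ t - s := by
      have := hxle s (t - s) (by omega)
      have he : s + (t - s) = t := by omega
      rwa [he] at this
    have h2 : G.dist (x 0) (x s) ≤ s := by
      have := hxle 0 s (by omega)
      simpa using this
    have h3 : G.dist (x t) (x d) ≤ d - t := by
      have := hxle t (d - t) (by omega)
      have he : t + (d - t) = d := by omega
      rwa [he] at this
    have htr1 : G.dist (x 0) (x d) ≤ G.dist (x 0) (x s) + G.dist (x s) (x d) :=
      hconn.dist_triangle
    have htr2 : G.dist (x s) (x d) ≤ G.dist (x s) (x t) + G.dist (x t) (x d) :=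
      hconn.dist_triangle
    have h0d : G.dist (x 0) (x d) = d := by rw [hx0, hxd, huv]
    omega
  -- k ≥ 3
  have hk3 : 3 ≤ k := k_ge_3 hconn hndb hreg hd hub hx
  -- k ≤ 6
  have hB := Bx_le_two hconn hndb hd hx
  have hlam := lam_le_three hconn hndb hd hx
  have hds := deg_split hconn (show G.Adj (x 1) (x 0) from (geo_adj hx (by omega)).symm)
  rw [Aset_comm, hreg (x 1)] at hds
  have hk6 : k ≤ 6 := by omega
  -- exclude k = 6
  rcases Nat.lt_or_ge k 6 with hk5 | hk6'
  · omega
  · exfalso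
    have hkeq : k = 6 := by omega
    rcases Nat.lt_or_ge d 4 with hd4 | hd4
    · have hd3 : d = 3 := by omega
      subst hd3
      exact d3_kill hconn hub hndb hreg hkeq hx
    · exact kill_ge4 hconn hndb hreg hd4 (by omega) hx
end

section
/- Let Γ be a regular nicely distance-balanced graph with diameter d = 3 and γ(Γ) = 4. Then every vertex x of Γ has eccentricity ε(x) = 3, i.e. max{d(x,z) : z ∈ V(Γ)} = 3 for every vertex x. -/
open SimpleGraph Finset

private lemma cross_walk {V : Type*} {G : SimpleGraph V} (P : V → Prop) :
    ∀ {u v : V} (_ : G.Walk u v), P u → ¬ P v →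
      ∃ x y, G.Adj x y ∧ P x ∧ ¬ P y := by
  intro u v p
  induction p with
  | nil => intro h h'; exact absurd h h'
  | @cons u w v h p ih =>
      intro hu hv
      by_cases hw : P w
      · exact ih hw hv
      · exact ⟨u, w, h, hu, hw⟩

private lemma main_contra {V : Type*} [Fintype V] (G : SimpleGraph V) [DecidableRel G.Adj]
    (hconn : G.Connected) (k : ℕ) (hreg : G.IsRegularOfDegree k)
    (hndb : IsNDB G 4)
    (x y b : V) (hxy : G.Adj x y) (hx : ∀ z, G.dist x z ≤ 2) (hb : G.dist y b = 3) :
    False := by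
  classical
  have d1 : G.dist x y = 1 := SimpleGraph.dist_eq_one_iff_adj.mpr hxy
  have d1' : G.dist y x = 1 := SimpleGraph.dist_eq_one_iff_adj.mpr hxy.symm
  -- basic distance facts
  have hdzx : ∀ z : V, G.dist z x ≤ 2 := fun z => by
    rw [SimpleGraph.dist_comm]; exact hx z
  have t1 : ∀ z : V, G.dist z y ≤ G.dist z x + 1 := fun z => by
    calc G.dist z y ≤ G.dist z x + G.dist x y := hconn.dist_triangle
    _ = G.dist z x + 1 := by rw [d1]
  have t2 : ∀ z : V, G.dist z x ≤ G.dist z y + 1 := fun z => by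
    calc G.dist z x ≤ G.dist z y + G.dist y x := hconn.dist_triangle
    _ = G.dist z y + 1 := by rw [d1']
  have e0x : ∀ z : V, G.dist z x = 0 ↔ z = x := fun z => hconn.dist_eq_zero_iff
  have e0y : ∀ z : V, G.dist z y = 0 ↔ z = y := fun z => hconn.dist_eq_zero_iff
  have e1x : ∀ z : V, G.dist z x = 1 ↔ G.Adj x z := fun z => by
    rw [SimpleGraph.dist_eq_one_iff_adj, G.adj_comm]
  have e1y : ∀ z : V, G.dist z y = 1 ↔ G.Adj y z := fun z => by
    rw [SimpleGraph.dist_eq_one_iff_adj, G.adj_comm]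
  set A : Finset V := univ.filter (fun z => G.Adj x z ∧ G.dist z y = 2) with hA
  set B : Finset V := univ.filter (fun z => G.Adj y z ∧ G.dist z x = 2) with hB
  set C : Finset V := univ.filter (fun z => G.Adj x z ∧ G.Adj y z) with hC
  set D3 : Finset V := univ.filter (fun z => G.dist z y = 3) with hD3
  -- decomposition of W_{x,y}
  have hW1 : ndbW G x y = {x} ∪ (A ∪ D3) := by
    ext z
    simp only [ndbW, hA, hD3, mem_filter, mem_univ, true_and, mem_union, mem_singleton]
    constructor
    · intro h
      have h2 := hdzx z
      have h3 := t1 z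
      have hc : G.dist z y = G.dist z x + 1 := by omega
      have : G.dist z x = 0 ∨ G.dist z x = 1 ∨ G.dist z x = 2 := by omega
      rcases this with h0 | h0 | h0
      · exact Or.inl ((e0x z).mp h0)
      · exact Or.inr (Or.inl ⟨(e1x z).mp h0, by omega⟩)
      · exact Or.inr (Or.inr (by omega))
    · rintro (rfl | ⟨ha, h2⟩ | h3)
      · rw [SimpleGraph.dist_self, d1]; omega
      · have := (e1x z).mpr ha; omega
      · have := hdzx z; omega
  -- decomposition of W_{y,x}
  have hW2 : ndbW G y x = {y} ∪ B := by
    ext z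
    simp only [ndbW, hB, mem_filter, mem_univ, true_and, mem_union, mem_singleton]
    constructor
    · intro h
      have h2 := hdzx z
      have h3 := t2 z
      have hc : G.dist z x = G.dist z y + 1 := by omega
      have : G.dist z y = 0 ∨ G.dist z y = 1 := by omega
      rcases this with h0 | h0
      · exact Or.inl ((e0y z).mp h0)
      · exact Or.inr ⟨(e1y z).mp h0, by omega⟩
    · rintro (rfl | ⟨ha, h2⟩)
      · rw [SimpleGraph.dist_self, d1']; omega
      · have := (e1y z).mpr ha; omega
  -- decomposition of the neighborhoods
  have hNy : G.neighborFinset y = {x} ∪ (C ∪ B) := by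
    ext z
    simp only [mem_neighborFinset, hB, hC, mem_filter, mem_univ, true_and, mem_union,
      mem_singleton]
    constructor
    · intro h
      have h2 := hdzx z
      have : G.dist z x = 0 ∨ G.dist z x = 1 ∨ G.dist z x = 2 := by omega
      rcases this with h0 | h0 | h0
      · exact Or.inl ((e0x z).mp h0)
      · exact Or.inr (Or.inl ⟨(e1x z).mp h0, h⟩)
      · exact Or.inr (Or.inr ⟨h, h0⟩)
    · rintro (rfl | ⟨_, h2⟩ | ⟨h1, _⟩)
      · exact hxy.symm
      · exact h2
      · exact h1
  have hNx : G.neighborFinset x = {y} ∪ (C ∪ A) := by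
    ext z
    simp only [mem_neighborFinset, hA, hC, mem_filter, mem_univ, true_and, mem_union,
      mem_singleton]
    constructor
    · intro h
      have hzx : G.dist z x = 1 := (e1x z).mpr h
      have h3 := t1 z
      have : G.dist z y = 0 ∨ G.dist z y = 1 ∨ G.dist z y = 2 := by omega
      rcases this with h0 | h0 | h0
      · exact Or.inl ((e0y z).mp h0)
      · exact Or.inr (Or.inl ⟨h, (e1y z).mp h0⟩)
      · exact Or.inr (Or.inr ⟨h, h0⟩)
    · rintro (rfl | ⟨h1, _⟩ | ⟨h1, _⟩)
      · exact hxy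
      · exact h1
      · exact h1
  -- disjointness facts
  have dAD : Disjoint A D3 := by
    rw [Finset.disjoint_left]
    intro z hz hz'
    simp only [hA, hD3, mem_filter] at hz hz'
    omega
  have dxAD : Disjoint {x} (A ∪ D3) := by
    simp only [Finset.disjoint_singleton_left, mem_union, hA, hD3, mem_filter, mem_univ,
      true_and]
    rintro (⟨h1, _⟩ | h1)
    · exact G.irrefl h1
    · rw [d1] at h1; omega
  have dyB : Disjoint {y} B := by
    simp only [Finset.disjoint_singleton_left, hB, mem_filter, mem_univ, true_and]
    rintro ⟨_, h2⟩
    rw [d1'] at h2; omega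
  have dCB : Disjoint C B := by
    rw [Finset.disjoint_left]
    intro z hz hz'
    simp only [hC, hB, mem_filter] at hz hz'
    have := (e1x z).mpr hz.2.1
    omega
  have dxCB : Disjoint {x} (C ∪ B) := by
    simp only [Finset.disjoint_singleton_left, mem_union, hC, hB, mem_filter, mem_univ,
      true_and]
    rintro (⟨h1, _⟩ | ⟨_, h2⟩)
    · exact G.irrefl h1
    · rw [SimpleGraph.dist_self] at h2; omega
  have dCA : Disjoint C A := by
    rw [Finset.disjoint_left]
    intro z hz hz'
    simp only [hC, hA, mem_filter] at hz hz'
    have := (e1y z).mpr hz.2.2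
    omega
  have dyCA : Disjoint {y} (C ∪ A) := by
    simp only [Finset.disjoint_singleton_left, mem_union, hC, hA, mem_filter, mem_univ,
      true_and]
    rintro (⟨_, h1⟩ | ⟨_, h2⟩)
    · exact G.irrefl h1
    · rw [SimpleGraph.dist_self] at h2; omega
  -- cardinality equations
  have c1 : (ndbW G x y).card = 1 + (A.card + D3.card) := by
    rw [hW1, card_union_of_disjoint dxAD, card_union_of_disjoint dAD, card_singleton]
  have c2 : (ndbW G y x).card = 1 + B.card := by
    rw [hW2, card_union_of_disjoint dyB, card_singleton]
  have c3 : k = 1 + (C.card + B.card) := by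
    have := hreg y
    rw [SimpleGraph.degree] at this
    rw [← this, hNy, card_union_of_disjoint dxCB, card_union_of_disjoint dCB, card_singleton]
  have c4 : k = 1 + (C.card + A.card) := by
    have := hreg x
    rw [SimpleGraph.degree] at this
    rw [← this, hNx, card_union_of_disjoint dyCA, card_union_of_disjoint dCA, card_singleton]
  have hbD3 : b ∈ D3 := by
    simp only [hD3, mem_filter, mem_univ, true_and]
    rw [SimpleGraph.dist_comm]; exact hb
  have hD3pos : 1 ≤ D3.card := card_pos.mpr ⟨b, hbD3⟩
  obtain ⟨w1, w2⟩ := hndb x y hxy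
  omega

/-- In a regular NDB graph with diameter `3` and `γ = 4`, every
vertex has eccentricity `3`. -/
theorem stmt_6 {V : Type*} [Fintype V] (G : SimpleGraph V) [DecidableRel G.Adj]
    (hconn : G.Connected) (k : ℕ) (hreg : G.IsRegularOfDegree k)
    (hdiam : HasDiam G 3) (hndb : IsNDB G 4) :
    ∀ x : V, (∀ z : V, G.dist x z ≤ 3) ∧ ∃ z : V, G.dist x z = 3 := by
  intro x
  refine ⟨fun z => hdiam.1 x z, ?_⟩
  by_contra hne
  push_neg at hne
  have hx : ∀ z, G.dist x z ≤ 2 := by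
    intro z
    have h1 := hdiam.1 x z
    have h2 := hne z
    omega
  obtain ⟨a, b0, hab⟩ := hdiam.2
  have hna : ¬ (∀ z, G.dist a z ≤ 2) := fun h => by have := h b0; omega
  obtain ⟨p⟩ := hconn x a
  obtain ⟨x', y', hxy', hx', hy'⟩ := cross_walk (fun v => ∀ z, G.dist v z ≤ 2) p hx hna
  push_neg at hy'
  obtain ⟨b, hb⟩ := hy'
  have hb3 : G.dist y' b = 3 := by
    have := hdiam.1 y' b
    omega
  exact main_contra G hconn k hreg hndb x' y' b hxy' hx' hb3
end

section
/- Let Γ be a regular nicely distance-balanced graph with diameter d = 3 and γ(Γ) = 4. Then for every edge xy of Γ we have |D^2_3(x,y)| = |D^3_2(x,y)| and both sets D^2_3(x,y) and D^3_2(x,y) are nonempty. -/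
/-! In diameter 3, `W_{u,v} = {u} ∪ D^1_2(u,v) ∪ D^2_3(u,v)` and the neighbourhood of `u` is
`{v} ∪ D^1_1(u,v) ∪ D^1_2(u,v)`. As `D^1_1` is symmetric in the edge, regularity and the
balance condition give `|D^2_3(u,v)| = |D^2_3(v,u)|` on every edge.

Suppose both vanish on `xy`. Having a vertex at distance 3 propagates backwards along edges, so
some `z` is at distance 3 from `x`, hence from `y`, and a neighbour `w` of `z` is at distance 2
from both. With `x, y ∈ D^2_3(w,z)` and `γ = 4`, `D^1_2(w,z)` is a single vertex `c`, a common
neighbour of `x`, `y` and `w`. Every common neighbour of `c` with `x` or `y` lies in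
`D^1_2(c,w)`, of size at most 3, while the edges `xc`, `yc` force at least `k - 3` of them on
each side with an overlap of at most `k - 5`: so `k - 1 ≤ 3`, against `k ≥ 5`. -/

open SimpleGraph Finset

namespace SimpleGraph

variable {V : Type*} {G : SimpleGraph V} {u v : V}

lemma Adj.dist_right_le (h : G.Adj u v) (p : V) : G.dist p v ≤ G.dist p u + 1 := by
  have := h.diff_dist_adj (u := p)
  omega

lemma Adj.dist_left_le (h : G.Adj u v) (p : V) : G.dist v p ≤ G.dist u p + 1 := by
  rw [dist_comm, dist_comm (u := u)]
  exact h.dist_right_le p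

lemma exists_adj_dist_eq_of_dist_eq_add_one {n : ℕ} (h : G.dist v u = n + 1) :
    ∃ w, G.Adj v w ∧ G.dist w u = n := by
  obtain ⟨p, hp⟩ := exists_walk_of_dist_ne_zero (by omega : G.dist v u ≠ 0)
  cases p with
  | nil => simp_all
  | @cons _ w _ hvw q =>
    refine ⟨w, hvw, le_antisymm ?_ ?_⟩
    · have := dist_le q
      simp only [Walk.length_cons] at hp
      omega
    · have := hvw.symm.dist_left_le u
      omega

end SimpleGraph

section NicelyDistanceBalanced

variable {V : Type*} [Fintype V] {G : SimpleGraph V} {u v : V}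

@[simp]
lemma mem_ndbW {p : V} : p ∈ ndbW G u v ↔ G.dist p u < G.dist p v := by
  simp [ndbW]

@[simp]
lemma mem_ndbD {p : V} {i j : ℕ} :
    p ∈ ndbD G u v i j ↔ G.dist p u = i ∧ G.dist p v = j := by
  simp [ndbD]

lemma ndbD_swap (i j : ℕ) : ndbD G v u j i = ndbD G u v i j := by
  ext
  simp [and_comm]

variable [DecidableEq V] {γ : ℕ}

lemma ndbW_eq_of_dist_le_three (hconn : G.Connected) (hd : ∀ p q, G.dist p q ≤ 3)
    (h : G.Adj u v) : ndbW G u v = insert u (ndbD G u v 1 2 ∪ ndbD G u v 2 3) := by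
  ext p
  have := h.diff_dist_adj (u := p)
  have := hd p v
  rw [mem_ndbW, mem_insert, mem_union, mem_ndbD, mem_ndbD]
  constructor
  · rw [← hconn.dist_eq_zero_iff]
    omega
  · rintro (rfl | _ | _)
    · simp [dist_eq_one_iff_adj.mpr h]
    all_goals omega

lemma card_ndbW_of_dist_le_three (hconn : G.Connected) (hd : ∀ p q, G.dist p q ≤ 3)
    (h : G.Adj u v) : #(ndbW G u v) = #(ndbD G u v 1 2) + #(ndbD G u v 2 3) + 1 := by
  rw [ndbW_eq_of_dist_le_three hconn hd h, card_insert_of_notMem, card_union_of_disjoint]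
  · exact disjoint_left.mpr fun p hp hq => by simp only [mem_ndbD] at hp hq; omega
  · simp

lemma card_ndbD_one_two_add_card_ndbD_two_three (hconn : G.Connected)
    (hd : ∀ p q, G.dist p q ≤ 3) (hndb : IsNDB G γ) (h : G.Adj u v) :
    #(ndbD G u v 1 2) + #(ndbD G u v 2 3) + 1 = γ :=
  (card_ndbW_of_dist_le_three hconn hd h).symm.trans (hndb u v h).1

variable [DecidableRel G.Adj]

lemma neighborFinset_eq_insert_ndbD (h : G.Adj u v) :
    G.neighborFinset u = insert v (ndbD G u v 1 1 ∪ ndbD G u v 1 2) := by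
  ext p
  rw [mem_neighborFinset, mem_insert, mem_union, mem_ndbD, mem_ndbD]
  constructor
  · intro hup
    rw [← (hup.symm.reachable.trans h.reachable).dist_eq_zero_iff]
    have := h.diff_dist_adj (u := p)
    have := dist_eq_one_iff_adj.mpr hup.symm
    omega
  · rintro (rfl | ⟨hpu, -⟩ | ⟨hpu, -⟩)
    · exact h
    all_goals exact (dist_eq_one_iff_adj.mp hpu).symm

lemma degree_eq_card_ndbD (h : G.Adj u v) :
    G.degree u = #(ndbD G u v 1 1) + #(ndbD G u v 1 2) + 1 := by
  rw [← card_neighborFinset_eq_degree, neighborFinset_eq_insert_ndbD h, card_insert_of_notMem,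
    card_union_of_disjoint]
  · exact disjoint_left.mpr fun p hp hq => by simp only [mem_ndbD] at hp hq; omega
  · simp

variable {k : ℕ}

lemma card_ndbD_one_two_comm (hreg : G.IsRegularOfDegree k) (h : G.Adj u v) :
    #(ndbD G u v 1 2) = #(ndbD G v u 1 2) := by
  have huv := degree_eq_card_ndbD h
  have hvu := degree_eq_card_ndbD h.symm
  rw [hreg u] at huv
  rw [hreg v, ndbD_swap (u := u) 1 1] at hvu
  omega

lemma card_ndbD_two_three_comm (hconn : G.Connected) (hd : ∀ p q, G.dist p q ≤ 3)
    (hndb : IsNDB G γ) (hreg : G.IsRegularOfDegree k) (h : G.Adj u v) :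
    #(ndbD G u v 2 3) = #(ndbD G v u 2 3) := by
  have huv := card_ndbD_one_two_add_card_ndbD_two_three hconn hd hndb h
  have hvu := card_ndbD_one_two_add_card_ndbD_two_three hconn hd hndb h.symm
  have := card_ndbD_one_two_comm hreg h
  omega

lemma exists_dist_eq_three_of_adj (hconn : G.Connected) (hd : ∀ p q, G.dist p q ≤ 3)
    (hndb : IsNDB G γ) (hreg : G.IsRegularOfDegree k) (h : G.Adj u v)
    (hv : ∃ p, G.dist p v = 3) : ∃ q, G.dist q u = 3 := by
  obtain ⟨p, hpv⟩ := hv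
  by_cases hpu : G.dist p u = 3
  · exact ⟨p, hpu⟩
  have hp : p ∈ ndbD G u v 2 3 := by
    have := h.dist_right_le p
    have := hd p u
    rw [mem_ndbD]
    omega
  obtain ⟨q, hq⟩ : (ndbD G v u 2 3).Nonempty := by
    rw [← card_pos, ← card_ndbD_two_three_comm hconn hd hndb hreg h]
    exact card_pos.mpr ⟨p, hp⟩
  exact ⟨q, (mem_ndbD.mp hq).2⟩

lemma exists_dist_eq_three (hconn : G.Connected) (hreg : G.IsRegularOfDegree k)
    (hdiam : HasDiam G 3) (hndb : IsNDB G γ) (x : V) : ∃ z, G.dist z x = 3 := by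
  obtain ⟨u, v, huv⟩ := hdiam.2
  obtain ⟨p⟩ := hconn.preconnected x v
  induction p with
  | nil => exact ⟨u, huv⟩
  | cons h _ ih => exact exists_dist_eq_three_of_adj hconn hdiam.1 hndb hreg h (ih huv)

lemma lt_card_ndbD_one_one_add_of_nonempty (hconn : G.Connected) (hd : ∀ p q, G.dist p q ≤ 3)
    (hndb : IsNDB G γ) (hreg : G.IsRegularOfDegree k) (h : G.Adj u v)
    (hvu : (ndbD G v u 2 3).Nonempty) : k < #(ndbD G u v 1 1) + γ := by
  have hdeg := degree_eq_card_ndbD h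
  rw [hreg u] at hdeg
  have := card_ndbD_one_two_add_card_ndbD_two_three hconn hd hndb h
  have := card_ndbD_two_three_comm hconn hd hndb hreg h
  have := hvu.card_pos
  omega

end NicelyDistanceBalanced

section ConstantFour

variable {V : Type*} [Fintype V] {G : SimpleGraph V} {u v w x y z c : V}

lemma ndbD_one_one_subset_ndbD_one_two (hwz : G.Adj w z) (hx : x ∈ ndbD G w z 2 3)
    (hc : ndbD G w z 1 2 = {c}) : ndbD G x c 1 1 ⊆ ndbD G c w 1 2 := by
  intro n hn
  obtain ⟨hxw, hxz⟩ := mem_ndbD.mp hx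
  obtain ⟨hnx, hnc⟩ := mem_ndbD.mp hn
  rw [dist_eq_one_iff_adj] at hnx hnc
  have hcw : G.dist c w = 1 := (mem_ndbD.mp (hc ▸ mem_singleton_self c)).1
  have hnw : G.dist n w ≠ 1 := by
    intro hnw
    have hnz : n ∈ ndbD G w z 1 2 := by
      have hnz := (dist_eq_one_iff_adj.mp hnw).symm.dist_left_le z
      have := hnx.dist_left_le z
      rw [dist_eq_one_iff_adj.mpr hwz] at hnz
      rw [mem_ndbD]
      omega
    rw [hc, mem_singleton] at hnz
    exact hnc.ne hnz
  have := hnc.symm.dist_left_le w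
  have := hnx.dist_left_le w
  rw [mem_ndbD, dist_eq_one_iff_adj]
  exact ⟨hnc, by omega⟩

variable [DecidableEq V]

lemma eq_of_mem_ndbD_one_two (hconn : G.Connected) (hd : ∀ p q, G.dist p q ≤ 3)
    (hndb : IsNDB G 4) (h : G.Adj u v) {a b p q : V} (ha : a ∈ ndbD G u v 2 3)
    (hb : b ∈ ndbD G u v 2 3) (hab : a ≠ b) (hp : p ∈ ndbD G u v 1 2)
    (hq : q ∈ ndbD G u v 1 2) : p = q := by
  have := card_ndbD_one_two_add_card_ndbD_two_three hconn hd hndb h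
  have := one_lt_card.mpr ⟨a, ha, b, hb, hab⟩
  exact card_le_one.mp (by omega) p hp q hq

lemma exists_ndbD_one_two_eq_singleton (hconn : G.Connected) (hd : ∀ p q, G.dist p q ≤ 3)
    (hndb : IsNDB G 4) (hxy : G.Adj x y) (hwz : G.Adj w z) (hx : x ∈ ndbD G w z 2 3)
    (hy : y ∈ ndbD G w z 2 3) : ∃ c, G.Adj c x ∧ G.Adj c y ∧ ndbD G w z 1 2 = {c} := by
  have step : ∀ a ∈ ndbD G w z 2 3, ∃ c, G.Adj c a ∧ c ∈ ndbD G w z 1 2 := by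
    intro a ha
    rw [mem_ndbD] at ha
    obtain ⟨c, hac, hcw⟩ :=
      exists_adj_dist_eq_of_dist_eq_add_one (show G.dist a w = 1 + 1 from ha.1)
    refine ⟨c, hac.symm, mem_ndbD.mpr ⟨hcw, ?_⟩⟩
    have hcz := (dist_eq_one_iff_adj.mp hcw).symm.dist_left_le z
    have := hac.symm.dist_left_le z
    rw [dist_eq_one_iff_adj.mpr hwz] at hcz
    omega
  obtain ⟨c, hcx, hc⟩ := step x hx
  obtain ⟨c', hc'y, hc'⟩ := step y hy
  have unique : ∀ p ∈ ndbD G w z 1 2, ∀ q ∈ ndbD G w z 1 2, p = q :=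
    fun p hp q hq => eq_of_mem_ndbD_one_two hconn hd hndb hwz hx hy hxy.ne hp hq
  refine ⟨c, hcx, unique c' hc' c hc ▸ hc'y, ?_⟩
  exact eq_singleton_iff_unique_mem.mpr ⟨hc, fun p hp => unique p hp c hc⟩

variable [DecidableRel G.Adj] {k : ℕ}

lemma exists_adj_of_ndbD_two_three_eq_empty (hconn : G.Connected)
    (hreg : G.IsRegularOfDegree k) (hdiam : HasDiam G 3) (hndb : IsNDB G 4)
    (hxy : G.Adj x y) (h23 : ndbD G x y 2 3 = ∅) (h32 : ndbD G y x 2 3 = ∅) :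
    ∃ w z, G.Adj w z ∧ x ∈ ndbD G w z 2 3 ∧ y ∈ ndbD G w z 2 3 := by
  have hnot : ∀ {a b : V}, ndbD G a b 2 3 = ∅ → ∀ p, G.dist p a = 2 → G.dist p b ≠ 3 :=
    fun h p ha hb => eq_empty_iff_forall_notMem.mp h p (mem_ndbD.mpr ⟨ha, hb⟩)
  obtain ⟨z, hzx⟩ := exists_dist_eq_three hconn hreg hdiam hndb x
  have hzy : G.dist z y = 3 := by
    have := hxy.symm.dist_right_le z
    have := hdiam.1 z y
    have := hnot h32 z
    omega
  obtain ⟨w, hzw, hwx⟩ :=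
    exists_adj_dist_eq_of_dist_eq_add_one (show G.dist z x = 2 + 1 from hzx)
  have hwy : G.dist w y = 2 := by
    have := hzw.symm.dist_left_le y
    have := hdiam.1 w y
    have := hnot h23 w hwx
    omega
  exact ⟨w, z, hzw.symm, mem_ndbD.mpr ⟨by rw [dist_comm, hwx], by rw [dist_comm, hzx]⟩,
    mem_ndbD.mpr ⟨by rw [dist_comm, hwy], by rw [dist_comm, hzy]⟩⟩

lemma ndbD_two_three_nonempty_of_subset (hconn : G.Connected) (hd : ∀ p q, G.dist p q ≤ 3)
    (hndb : IsNDB G 4) (hreg : G.IsRegularOfDegree k) (hxy : G.Adj x y) (hcx : G.Adj c x)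
    (hcy : G.Adj c y) (hcw : G.Adj c w)
    (hsub : ndbD G x c 1 1 ∪ ndbD G y c 1 1 ⊆ ndbD G c w 1 2)
    (hx : (ndbD G c x 2 3).Nonempty) (hy : (ndbD G c y 2 3).Nonempty) :
    (ndbD G x y 2 3).Nonempty := by
  have hc : c ∈ ndbD G x y 1 1 :=
    mem_ndbD.mpr ⟨dist_eq_one_iff_adj.mpr hcx, dist_eq_one_iff_adj.mpr hcy⟩
  have hinter : ndbD G x c 1 1 ∩ ndbD G y c 1 1 ⊆ (ndbD G x y 1 1).erase c := by
    intro n hn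
    simp only [mem_inter, mem_ndbD] at hn
    refine mem_erase.mpr ⟨fun hnc => ?_, mem_ndbD.mpr ⟨hn.1.1, hn.2.1⟩⟩
    simp [hnc] at hn
  have hdeg := degree_eq_card_ndbD hxy
  rw [hreg x] at hdeg
  have := card_ndbD_one_two_add_card_ndbD_two_three hconn hd hndb hxy
  have := card_ndbD_one_two_add_card_ndbD_two_three hconn hd hndb hcw
  have := lt_card_ndbD_one_one_add_of_nonempty hconn hd hndb hreg hcx.symm hx
  have := lt_card_ndbD_one_one_add_of_nonempty hconn hd hndb hreg hcy.symm hy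
  have := card_union_add_card_inter (ndbD G x c 1 1) (ndbD G y c 1 1)
  have := card_le_card hsub
  have := card_le_card hinter
  rw [card_erase_of_mem hc] at this
  have := card_pos.mpr ⟨c, hc⟩
  rw [← card_pos]
  omega

lemma ndbD_two_three_nonempty (hconn : G.Connected) (hreg : G.IsRegularOfDegree k)
    (hdiam : HasDiam G 3) (hndb : IsNDB G 4) (hxy : G.Adj x y) :
    (ndbD G x y 2 3).Nonempty := by
  by_contra h23
  rw [not_nonempty_iff_eq_empty] at h23
  have h32 : ndbD G y x 2 3 = ∅ := by
    rw [← card_eq_zero, ← card_ndbD_two_three_comm hconn hdiam.1 hndb hreg hxy, h23, card_empty]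
  obtain ⟨w, z, hwz, hx, hy⟩ :=
    exists_adj_of_ndbD_two_three_eq_empty hconn hreg hdiam hndb hxy h23 h32
  obtain ⟨c, hcx, hcy, hc⟩ := exists_ndbD_one_two_eq_singleton hconn hdiam.1 hndb hxy hwz hx hy
  obtain ⟨hcw, hcz⟩ := mem_ndbD.mp (hc ▸ mem_singleton_self c)
  have hz : ∀ a ∈ ndbD G w z 2 3, z ∈ ndbD G c a 2 3 := fun a ha =>
    mem_ndbD.mpr ⟨by rw [dist_comm, hcz], by rw [dist_comm, (mem_ndbD.mp ha).2]⟩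
  have := ndbD_two_three_nonempty_of_subset hconn hdiam.1 hndb hreg hxy hcx hcy
    (dist_eq_one_iff_adj.mp hcw)
    (union_subset (ndbD_one_one_subset_ndbD_one_two hwz hx hc)
      (ndbD_one_one_subset_ndbD_one_two hwz hy hc)) ⟨z, hz x hx⟩ ⟨z, hz y hy⟩
  exact not_nonempty_empty (h23 ▸ this)

end ConstantFour

/-- In a regular NDB graph with diameter `3` and `γ = 4`, for every
edge `xy` we have `|D^2_3(x,y)| = |D^3_2(x,y)|` and both sets are nonempty. -/
theorem stmt_7 {V : Type*} [Fintype V] (G : SimpleGraph V) [DecidableRel G.Adj]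
    (hconn : G.Connected) (k : ℕ) (hreg : G.IsRegularOfDegree k)
    (hdiam : HasDiam G 3) (hndb : IsNDB G 4)
    (x y : V) (hxy : G.Adj x y) :
    (ndbD G x y 2 3).card = (ndbD G x y 3 2).card ∧
    (ndbD G x y 2 3).Nonempty ∧ (ndbD G x y 3 2).Nonempty := by
  classical
  have hcard : #(ndbD G x y 2 3) = #(ndbD G x y 3 2) := by
    rw [← ndbD_swap (u := x) 3 2]
    exact card_ndbD_two_three_comm hconn hdiam.1 hndb hreg hxy
  have hne := ndbD_two_three_nonempty hconn hreg hdiam hndb hxy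
  exact ⟨hcard, hne, card_pos.mp (hcard ▸ hne.card_pos)⟩
end

section
/- Let Γ be a regular nicely distance-balanced graph with valency k = 3, diameter d = 4 and γ(Γ) = 5. Then Γ is triangle-free, i.e. no two adjacent vertices of Γ have a common neighbour. -/
/-!
Let `Γ` be connected and `k`-regular with `|W_{u,v}| = γ` for all edges. Counting the pairs
`(x, v)` together with a neighbour of `v` closer to `x` gives `n (n - 1) ≤ k γ n`, i.e.
`n ≤ k γ + 1 = 16`, with equality only if each `v ≠ x` has a unique neighbour closer to `x`, i.e.
`Γ` is geodetic. A triangle `uvw` forces `n ≥ 3 γ = 15`, since the distances from any `x` to `u`,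
`v`, `w` take at most two values; cubic graphs have even order, so `n = 16` and `Γ` is geodetic.

In a cubic geodetic graph on more than four vertices two triangles share no edge, so the
breadth-first levels around `v` have sizes `1, 3, 4`; parity and the diameter bound then leave
no room for a fourth level. Hence every vertex is within distance `3` of `v`, which confines
`W_{u,v}` to the third neighbour `u'` of `u` and the neighbours of `u'`: `|W_{u,v}| ≤ 4 < 5`.
-/

open SimpleGraph Finset

namespace SimpleGraph

variable {V : Type*} {G : SimpleGraph V}

lemma Adj.dist_le_dist_add_one {a b : V} (h : G.Adj a b) (x : V) :
    G.dist x b ≤ G.dist x a + 1 := by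
  rcases h.diff_dist_adj (u := x) with h | h | h <;> omega

lemma Connected.exists_adj_dist_add_one_eq (hconn : G.Connected) {x v : V} (h : v ≠ x) :
    ∃ y, G.Adj v y ∧ G.dist x y + 1 = G.dist x v := by
  obtain ⟨p, hp⟩ := hconn.exists_walk_length_eq_dist v x
  cases p with
  | nil => exact absurd rfl h
  | @cons _ y _ hadj q =>
    refine ⟨y, hadj, ?_⟩
    have hq : G.dist x y ≤ q.length := dist_comm.trans_le (dist_le q)
    have htri := hadj.symm.dist_le_dist_add_one x
    rw [Walk.length_cons, dist_comm] at hp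
    omega

lemma Connected.forall_mem_of_adj_mem (hconn : G.Connected) {S : Set V} {a : V} (ha : a ∈ S)
    (hS : ∀ x ∈ S, ∀ y, G.Adj x y → y ∈ S) (x : V) : x ∈ S := by
  obtain ⟨p⟩ := hconn a x
  induction p with
  | nil => exact ha
  | cons h _ ih => exact ih (hS _ ha _ h)

lemma dist_eq_two_of_adj_of_adj {x y c : V} (hne : x ≠ y) (hnadj : ¬ G.Adj x y)
    (h₁ : G.Adj x c) (h₂ : G.Adj c y) : G.dist x y = 2 := by
  have hle : G.dist x y ≤ 2 := dist_le (h₁.toWalk.append h₂.toWalk) |>.trans_eq (by simp)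
  have hlt := (h₁.reachable.trans h₂.reachable).one_lt_dist_of_ne_of_not_adj hne hnadj
  omega

variable (G) in
/-- For connected graphs this says that shortest paths are unique. -/
def IsGeodetic : Prop :=
  ∀ ⦃x v y₁ y₂ : V⦄, G.Adj v y₁ → G.Adj v y₂ → G.dist x y₁ < G.dist x v →
    G.dist x y₂ < G.dist x v → y₁ = y₂

lemma IsGeodetic.adj_of_adj_of_adj (hG : G.IsGeodetic) {t s x y : V} (hts : t ≠ s) (hxy : x ≠ y)
    (htx : G.Adj t x) (hty : G.Adj t y) (hsx : G.Adj s x) (hsy : G.Adj s y) : G.Adj t s := by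
  by_contra hnadj
  have hd := dist_eq_two_of_adj_of_adj hts hnadj htx hsx.symm
  refine hxy (hG (x := t) hsx hsy ?_ ?_)
  · rw [hd, dist_eq_one_iff_adj.mpr htx]; omega
  · rw [hd, dist_eq_one_iff_adj.mpr hty]; omega

section DecidableAdj

variable [DecidableRel G.Adj]

lemma even_sum_card_filter_adj (A : Finset V) : Even (∑ y ∈ A, #{z ∈ A | G.Adj y z}) := by
  have h : ∑ p ∈ A ×ˢ A, (if G.Adj p.1 p.2 then (1 : ZMod 2) else 0) = 0 := by
    refine sum_involution (fun p _ => p.swap) (fun p _ => ?_) (fun p _ hp => ?_)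
      (fun p hp => by simpa [and_comm] using hp) (fun p _ => rfl)
    · by_cases h : G.Adj p.1 p.2
      · simp only [h, h.symm, ↓reduceIte, Prod.fst_swap, Prod.snd_swap]
        decide
      · have h' : ¬ G.Adj p.2 p.1 := fun h' => h h'.symm
        simp [h, h']
    · intro hswap
      have : G.Adj p.1 p.2 := by by_contra h; simp [h] at hp
      exact this.ne (congrArg Prod.fst hswap).symm
  rw [sum_product] at h
  rw [← ZMod.natCast_eq_zero_iff_even, ← h, Nat.cast_sum]
  refine sum_congr rfl fun y _ => ?_
  rw [card_filter, Nat.cast_sum]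
  simp only [Nat.cast_ite, Nat.cast_one, Nat.cast_zero]

variable [DecidableEq V]

lemma IsGeodetic.card_eq_three_of_forall_card_filter_adj_eq_two (hG : G.IsGeodetic)
    {S : Finset V} (hS : ∀ t ∈ S, #{z ∈ S | G.Adj t z} = 2) (hne : S.Nonempty)
    (hcard : #S ≤ 4) : #S = 3 := by
  obtain ⟨t, ht⟩ := hne
  obtain ⟨x, y, hxy, htxy⟩ := card_eq_two.mp (hS t ht)
  have hx : x ∈ {z ∈ S | G.Adj t z} := htxy ▸ by simp
  have hy : y ∈ {z ∈ S | G.Adj t z} := htxy ▸ by simp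
  rw [mem_filter] at hx hy
  have hsub : {t, x, y} ⊆ S := by simp [insert_subset_iff, ht, hx.1, hy.1]
  have h3 : #{t, x, y} = 3 := card_eq_three.mpr ⟨t, x, y, hx.2.ne, hy.2.ne, hxy, rfl⟩
  have := card_le_card hsub
  by_contra hne3
  obtain ⟨s, hs⟩ := card_eq_one.mp (by rw [card_sdiff_of_subset hsub]; omega :
    #(S \ {t, x, y}) = 1)
  have hsS : s ∈ S \ {t, x, y} := hs ▸ mem_singleton_self s
  simp only [mem_sdiff, mem_insert, mem_singleton, not_or] at hsS
  have hts : ¬ G.Adj t s := fun h => by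
    have : s ∈ {z ∈ S | G.Adj t z} := by simp [hsS.1, h]
    simp [htxy, hsS.2.2.1, hsS.2.2.2] at this
  have hNs : {z ∈ S | G.Adj s z} = {x, y} := by
    refine eq_of_subset_of_card_le (fun r hr => ?_) (by rw [hS s hsS.1, card_pair hxy])
    rw [mem_filter] at hr
    by_contra hrxy
    have hr' : r ∈ S \ {t, x, y} := by
      simp only [mem_insert, mem_singleton, not_or] at hrxy
      simp only [mem_sdiff, mem_insert, mem_singleton, not_or]
      exact ⟨hr.1, fun h => hts (h ▸ hr.2.symm), hrxy⟩
    rw [hs, mem_singleton] at hr'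
    exact hr.2.ne hr'.symm
  have hsx : G.Adj s x := (mem_filter.mp (hNs ▸ by simp : x ∈ {z ∈ S | G.Adj s z})).2
  have hsy : G.Adj s y := (mem_filter.mp (hNs ▸ by simp : y ∈ {z ∈ S | G.Adj s z})).2
  exact hts (hG.adj_of_adj_of_adj (Ne.symm hsS.2.1) hxy hx.2 hy.2 hsx hsy)

end DecidableAdj

section Finite

variable [Fintype V] {k γ : ℕ}

lemma three_mul_le_card_of_isNDB (hndb : IsNDB G γ) {u v w : V}
    (huv : G.Adj u v) (huw : G.Adj u w) (hvw : G.Adj v w) : 3 * γ ≤ Fintype.card V := by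
  have hx : ∀ x : V,
      ((if G.dist x u < G.dist x v then 1 else 0) + (if G.dist x v < G.dist x u then 1 else 0))
      + ((if G.dist x u < G.dist x w then 1 else 0) + (if G.dist x w < G.dist x u then 1 else 0))
      + ((if G.dist x v < G.dist x w then 1 else 0) + (if G.dist x w < G.dist x v then 1 else 0))
      ≤ 2 := by
    intro x
    have := huv.dist_le_dist_add_one x
    have := huv.symm.dist_le_dist_add_one x
    have := huw.dist_le_dist_add_one x
    have := huw.symm.dist_le_dist_add_one x
    have := hvw.dist_le_dist_add_one x
    have := hvw.symm.dist_le_dist_add_one x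
    split_ifs <;> omega
  have h6 : 6 * γ = (#(ndbW G u v) + #(ndbW G v u)) + (#(ndbW G u w) + #(ndbW G w u))
      + (#(ndbW G v w) + #(ndbW G w v)) := by
    rw [(hndb u v huv).1, (hndb u v huv).2, (hndb u w huw).1, (hndb u w huw).2,
      (hndb v w hvw).1, (hndb v w hvw).2]
    ring
  have := sum_le_sum fun x (_ : x ∈ univ) => hx x
  simp only [ndbW, card_filter, sum_add_distrib, sum_const, card_univ, smul_eq_mul] at h6 this
  omega

variable (G) in
noncomputable def level (u : V) (i : ℕ) : Finset V := {x | G.dist u x = i}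

@[simp]
lemma mem_level {u x : V} {i : ℕ} : x ∈ G.level u i ↔ G.dist u x = i := by simp [level]

lemma level_zero (hconn : G.Connected) (u : V) : G.level u 0 = {u} := by
  ext x
  simp [hconn.dist_eq_zero_iff, eq_comm]

lemma sum_card_level {u : V} {D : ℕ} (h : ∀ x, G.dist u x ≤ D) :
    ∑ i ∈ range (D + 1), #(G.level u i) = Fintype.card V := by
  rw [← card_univ, card_eq_sum_card_fiberwise fun x _ => mem_range.mpr (Nat.lt_succ_of_le (h x))]
  rfl

variable [DecidableRel G.Adj]

lemma level_one (u : V) : G.level u 1 = G.neighborFinset u := by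
  ext x
  simp

lemma IsRegularOfDegree.even_card (hreg : G.IsRegularOfDegree k) (hk : Odd k) :
    Even (Fintype.card V) := by
  have h := G.sum_degrees_eq_twice_card_edges
  simp only [hreg.degree_eq, sum_const, card_univ, smul_eq_mul] at h
  exact (Nat.even_mul.mp ⟨_, h.trans (two_mul _)⟩).resolve_right (Nat.not_even_iff_odd.mpr hk)

variable (G) in
noncomputable def closerNeighbors (x v : V) : Finset V :=
  {u ∈ G.neighborFinset v | G.dist x u < G.dist x v}

lemma sum_card_closerNeighbors (hreg : G.IsRegularOfDegree k) (hndb : IsNDB G γ) :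
    ∑ x, ∑ v, #(G.closerNeighbors x v) = k * γ * Fintype.card V := by
  rw [sum_comm]
  have hv : ∀ v, ∑ x, #(G.closerNeighbors x v) = k * γ := by
    intro v
    simp_rw [closerNeighbors, card_filter]
    rw [sum_comm]
    have hu : ∀ u ∈ G.neighborFinset v,
        ∑ x, (if G.dist x u < G.dist x v then 1 else 0) = γ := fun u hu => by
      rw [← card_filter]
      exact (hndb u v ((mem_neighborFinset _ _ _).mp hu).symm).1
    rw [sum_congr rfl hu, sum_const, card_neighborFinset_eq_degree, hreg.degree_eq, smul_eq_mul]
  rw [sum_congr rfl fun v _ => hv v, sum_const, card_univ, smul_eq_mul, mul_comm]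

lemma IsGeodetic.card_filter_adj_level (hG : G.IsGeodetic) (hconn : G.Connected) {u x : V} {i : ℕ}
    (hx : x ∈ G.level u (i + 1)) :
    #{y ∈ G.level u i | G.Adj x y} = 1 := by
  rw [mem_level] at hx
  obtain ⟨y, hy, hd⟩ := hconn.exists_adj_dist_add_one_eq (x := u) (v := x)
    (by rintro rfl; simp at hx)
  rw [card_eq_one]
  refine ⟨y, eq_singleton_iff_unique_mem.mpr ⟨by simp [hy]; omega, fun z hz => ?_⟩⟩
  simp only [mem_filter, mem_level] at hz
  exact hG (x := u) hz.2 hy (by omega) (by omega)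

lemma IsGeodetic.card_level_succ (hG : G.IsGeodetic) (hconn : G.Connected) (u : V) (i : ℕ) :
    #(G.level u (i + 1)) = ∑ y ∈ G.level u i, #{z ∈ G.level u (i + 1) | G.Adj y z} := by
  have := sum_card_bipartiteAbove_eq_sum_card_bipartiteBelow (s := G.level u i)
    (t := G.level u (i + 1)) (r := G.Adj)
  simp only [bipartiteAbove, bipartiteBelow] at this
  rw [this, card_eq_sum_ones]
  refine sum_congr rfl fun z hz => ?_
  simp_rw [adj_comm _ _ z]
  exact (hG.card_filter_adj_level hconn hz).symm

lemma IsGeodetic.card_filter_adj_level_add (hG : G.IsGeodetic) (hconn : G.Connected)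
    (hreg : G.IsRegularOfDegree k) {u x : V} {i : ℕ} (hx : x ∈ G.level u (i + 1)) :
    #{z ∈ G.level u (i + 1) | G.Adj x z} + #{z ∈ G.level u (i + 2) | G.Adj x z} + 1 = k := by
  have hfiber : ∀ j,
      {z ∈ G.neighborFinset x | G.dist u z = j} = {z ∈ G.level u j | G.Adj x z} := fun j => by
    ext; simp [and_comm]
  have hmaps : ∀ z ∈ G.neighborFinset x, G.dist u z ∈ ({i, i + 1, i + 2} : Finset ℕ) := by
    intro z hz
    rw [mem_neighborFinset] at hz
    rw [mem_level] at hx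
    have := hz.dist_le_dist_add_one u
    have := hz.symm.dist_le_dist_add_one u
    simp only [mem_insert, mem_singleton]
    omega
  rw [← hreg.degree_eq x, ← card_neighborFinset_eq_degree, card_eq_sum_card_fiberwise hmaps,
    sum_insert (by simp), sum_pair (by simp), hfiber, hfiber, hfiber,
    hG.card_filter_adj_level hconn hx]
  ring

lemma IsGeodetic.sum_card_filter_adj_level (hG : G.IsGeodetic) (hconn : G.Connected)
    (hreg : G.IsRegularOfDegree k) (u : V) (i : ℕ) :
    ∑ y ∈ G.level u (i + 1), #{z ∈ G.level u (i + 1) | G.Adj y z} + #(G.level u (i + 2))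
      + #(G.level u (i + 1)) = k * #(G.level u (i + 1)) := by
  rw [hG.card_level_succ hconn u (i + 1), card_eq_sum_ones (G.level u (i + 1)),
    ← sum_add_distrib, ← sum_add_distrib, mul_sum, mul_one]
  exact sum_congr rfl fun y hy => hG.card_filter_adj_level_add hconn hreg hy

variable [DecidableEq V]

lemma Connected.ite_le_card_closerNeighbors (hconn : G.Connected) (x v : V) :
    (if v = x then 0 else 1) ≤ #(G.closerNeighbors x v) := by
  split_ifs with h
  · exact Nat.zero_le _
  obtain ⟨y, hy, hd⟩ := hconn.exists_adj_dist_add_one_eq h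
  exact card_pos.mpr ⟨y, by simp [closerNeighbors, hy]; omega⟩

lemma Connected.card_mul_card_sub_one_le_of_isNDB (hconn : G.Connected)
    (hreg : G.IsRegularOfDegree k) (hndb : IsNDB G γ) :
    Fintype.card V * (Fintype.card V - 1) ≤ k * γ * Fintype.card V := by
  rw [← sum_card_closerNeighbors hreg hndb]
  calc Fintype.card V * (Fintype.card V - 1) = ∑ x : V, ∑ v : V, if v = x then 0 else 1 := by
        simp [sum_ite, filter_ne']
    _ ≤ _ := sum_le_sum fun x _ => sum_le_sum fun v _ => hconn.ite_le_card_closerNeighbors x v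

lemma Connected.card_le_of_isNDB (hconn : G.Connected)
    (hreg : G.IsRegularOfDegree k) (hndb : IsNDB G γ) : Fintype.card V ≤ k * γ + 1 := by
  have h := hconn.card_mul_card_sub_one_le_of_isNDB hreg hndb
  rw [mul_comm (k * γ)] at h
  have := Nat.le_of_mul_le_mul_left h (Fintype.card_pos_iff.mpr hconn.nonempty)
  omega

lemma Connected.isGeodetic_of_isNDB (hconn : G.Connected)
    (hreg : G.IsRegularOfDegree k) (hndb : IsNDB G γ) (hcard : Fintype.card V = k * γ + 1) :
    G.IsGeodetic := by
  intro x v y₁ y₂ h₁ h₂ hd₁ hd₂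
  have hle := hconn.ite_le_card_closerNeighbors (G := G)
  have hsum : ∑ x : V, ∑ v : V, (if v = x then 0 else 1)
      = ∑ x, ∑ v, #(G.closerNeighbors x v) := by
    rw [sum_card_closerNeighbors hreg hndb, hcard]
    simp [sum_ite, filter_ne', hcard, mul_comm]
  have hx := (sum_eq_sum_iff_of_le fun x _ => sum_le_sum fun v _ => hle x v).1 hsum x (mem_univ x)
  have hxv := (sum_eq_sum_iff_of_le fun v _ => hle x v).1 hx v (mem_univ v)
  have hvx : v ≠ x := by rintro rfl; simp at hd₁
  rw [if_neg hvx] at hxv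
  exact card_le_one.mp hxv.symm.le _ (by simp [closerNeighbors, h₁, hd₁]) _
    (by simp [closerNeighbors, h₂, hd₂])

lemma IsRegularOfDegree.neighborFinset_eq (hreg : G.IsRegularOfDegree 3)
    {u a b c : V} (ha : G.Adj u a) (hb : G.Adj u b) (hc : G.Adj u c)
    (hab : a ≠ b) (hac : a ≠ c) (hbc : b ≠ c) : G.neighborFinset u = {a, b, c} := by
  refine (eq_of_subset_of_card_le ?_ ?_).symm
  · intro t ht
    simp only [mem_insert, mem_singleton] at ht
    rcases ht with rfl | rfl | rfl <;> simpa
  · rw [card_neighborFinset_eq_degree, hreg.degree_eq,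
      card_eq_three.mpr ⟨a, b, c, hab, hac, hbc, rfl⟩]

lemma IsRegularOfDegree.exists_neighborFinset_eq (hreg : G.IsRegularOfDegree 3) {u v w : V}
    (hv : G.Adj u v) (hw : G.Adj u w) (hvw : v ≠ w) :
    ∃ z, z ≠ v ∧ z ≠ w ∧ G.neighborFinset u = {v, w, z} := by
  have hcard : #(G.neighborFinset u \ {v, w}) = 1 := by
    rw [card_sdiff_of_subset (by simp [insert_subset_iff, hv, hw]), card_neighborFinset_eq_degree,
      hreg.degree_eq, card_pair hvw]
  obtain ⟨z, hz⟩ := card_eq_one.mp hcard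
  have hzmem : z ∈ G.neighborFinset u \ {v, w} := hz ▸ mem_singleton_self z
  simp only [mem_sdiff, mem_neighborFinset, mem_insert, mem_singleton, not_or] at hzmem
  exact ⟨z, hzmem.2.1, hzmem.2.2,
    hreg.neighborFinset_eq hv hw hzmem.1 hvw (Ne.symm hzmem.2.1) (Ne.symm hzmem.2.2)⟩

/-- Otherwise geodeticity makes `z` adjacent to `c`, and this `K₄` would be the whole cubic
graph. -/
lemma IsGeodetic.eq_of_adj_of_adj (hG : G.IsGeodetic) (hconn : G.Connected)
    (hreg : G.IsRegularOfDegree 3) (hcard : 4 < Fintype.card V) {a b c z : V}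
    (hab : G.Adj a b) (hac : G.Adj a c) (hbc : G.Adj b c) (hza : G.Adj z a) (hzb : G.Adj z b) :
    z = c := by
  by_contra hzc
  have hzc' : G.Adj z c := (hG.adj_of_adj_of_adj hzc hab.ne hza hzb hac.symm hbc.symm)
  have hNa := hreg.neighborFinset_eq hab hac hza.symm hbc.ne hzb.ne.symm (Ne.symm hzc)
  have hNb := hreg.neighborFinset_eq hab.symm hbc hzb.symm hac.ne hza.ne.symm (Ne.symm hzc)
  have hNc := hreg.neighborFinset_eq hac.symm hbc.symm hzc'.symm hab.ne hza.ne.symm hzb.ne.symm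
  have hNz := hreg.neighborFinset_eq hza hzb hzc' hab.ne hac.ne hbc.ne
  have hclosed :
      ∀ x ∈ ({a, b, c, z} : Set V), ∀ y, G.Adj x y → y ∈ ({a, b, c, z} : Set V) := by
    intro x hx y hxy
    rw [← mem_neighborFinset] at hxy
    rcases hx with rfl | rfl | rfl | rfl <;>
      simp only [hNa, hNb, hNc, hNz, mem_insert, mem_singleton] at hxy <;> tauto
  have huniv : (univ : Finset V) ⊆ {a, b, c, z} := fun x _ => by
    simpa using hconn.forall_mem_of_adj_mem (a := a) (by simp) hclosed x
  have := (card_le_card huniv).trans card_le_four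
  rw [card_univ] at this
  omega

lemma IsGeodetic.card_level_two (hG : G.IsGeodetic) (hconn : G.Connected)
    (hreg : G.IsRegularOfDegree 3) (hcard : 4 < Fintype.card V) {u v w : V}
    (huv : G.Adj u v) (huw : G.Adj u w) (hvw : G.Adj v w) : #(G.level u 2) = 4 := by
  obtain ⟨u', hu'v, hu'w, hNu⟩ := hreg.exists_neighborFinset_eq huv huw hvw.ne
  have huu' : G.Adj u u' := by simp [← mem_neighborFinset, hNu]
  have hvu' : ¬ G.Adj v u' := fun h =>
    hu'w (hG.eq_of_adj_of_adj hconn hreg hcard huv huw hvw huu'.symm h.symm)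
  have hwu' : ¬ G.Adj w u' := fun h =>
    hu'v (hG.eq_of_adj_of_adj hconn hreg hcard huw huv hvw.symm huu'.symm h.symm)
  have h1 := hG.sum_card_filter_adj_level hconn hreg u 0
  rw [level_one, hNu, card_eq_three.mpr ⟨v, w, u', hvw.ne, hu'v.symm, hu'w.symm, rfl⟩] at h1
  rw [sum_insert (by simp [hvw.ne, hu'v.symm]), sum_pair hu'w.symm] at h1
  simp only [filter_insert, filter_singleton, SimpleGraph.irrefl, hvw, hvw.symm, hvu', hwu',
    mt G.adj_symm hvu', mt G.adj_symm hwu', ↓reduceIte, insert_empty_eq, card_singleton,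
    card_empty, Nat.reduceAdd] at h1
  omega

/-- The levels around `u` have sizes `1, 3, 4, n₃, n₄` with sum `16`. Parity of the edges inside
level `2` makes `n₃` even and the edges from level `3` give `n₄ ≤ 2 n₃`, so `n₄ ∈ {0, 2, 4}`; but
a nonempty level `4` spans a `2`-regular graph (there is no level `5`), hence a triangle. -/
lemma IsGeodetic.dist_le_three (hG : G.IsGeodetic) (hconn : G.Connected)
    (hreg : G.IsRegularOfDegree 3) (hcard : Fintype.card V = 16) {u : V}
    (hdiam : ∀ x, G.dist u x ≤ 4) (hL2 : #(G.level u 2) = 4) (x : V) : G.dist u x ≤ 3 := by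
  have hsum := sum_card_level hdiam
  simp only [sum_range_succ, sum_range_zero, level_zero hconn, level_one, card_singleton,
    card_neighborFinset_eq_degree, hreg.degree_eq, hcard] at hsum
  have h2 := hG.sum_card_filter_adj_level hconn hreg u 1
  have h3 := hG.sum_card_filter_adj_level hconn hreg u 2
  norm_num at h2 h3
  obtain ⟨m, hm⟩ := even_sum_card_filter_adj (G := G) (G.level u 2)
  have hL4 : ∀ t ∈ G.level u 4, #{z ∈ G.level u 4 | G.Adj t z} = 2 := by
    intro t ht
    have h5 : G.level u 5 = ∅ := eq_empty_of_forall_notMem fun z hz => by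
      have := hdiam z
      rw [mem_level] at hz
      omega
    simpa [h5] using hG.card_filter_adj_level_add hconn hreg (i := 3) ht
  by_contra! hx
  have h4 := hG.card_eq_three_of_forall_card_filter_adj_eq_two hL4
    ⟨x, mem_level.mpr (le_antisymm (hdiam x) hx)⟩ (by omega)
  omega

/-- A vertex of `W_{u,v}` is within distance `2` of `u`, and at distance `2` its neighbour
towards `u` can only be `u'`. -/
lemma card_ndbW_le_four (hconn : G.Connected) (hreg : G.IsRegularOfDegree 3) {u v w u' : V}
    (hNu : G.neighborFinset u = {v, w, u'}) (hvw : G.Adj v w) (hv : ∀ x, G.dist v x ≤ 3) :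
    #(ndbW G u v) ≤ 4 := by
  have huu' : G.Adj u u' := by simp [← mem_neighborFinset, hNu]
  have hsub : ndbW G u v ⊆ insert u' (G.neighborFinset u') := by
    intro x hx
    simp only [ndbW, mem_filter, mem_univ, true_and] at hx
    rw [dist_comm (u := x) (v := u), dist_comm (u := x) (v := v)] at hx
    have hxv := hv x
    rw [mem_insert, mem_neighborFinset]
    rcases (by omega : G.dist u x = 0 ∨ G.dist u x = 1 ∨ G.dist u x = 2) with h0 | h1 | h2
    · exact .inr (hconn.dist_eq_zero_iff.mp h0 ▸ huu'.symm)
    · have hxN : x ∈ G.neighborFinset u := by simpa using h1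
      simp only [hNu, mem_insert, mem_singleton] at hxN
      rcases hxN with rfl | rfl | rfl
      · simp at hx
      · rw [dist_eq_one_iff_adj.mpr hvw] at hx
        omega
      · exact .inl rfl
    · obtain ⟨p, hxp, hp⟩ := hconn.exists_adj_dist_add_one_eq (x := u) (v := x)
        (by rintro rfl; simp at h2)
      have hpN : p ∈ G.neighborFinset u := by
        rw [mem_neighborFinset, ← dist_eq_one_iff_adj]
        omega
      simp only [hNu, mem_insert, mem_singleton] at hpN
      rcases hpN with rfl | rfl | hpu'
      · rw [dist_eq_one_iff_adj.mpr hxp.symm] at hx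
        omega
      · have := hvw.symm.dist_le_dist_add_one x
        rw [dist_eq_one_iff_adj.mpr hxp, dist_comm (u := x)] at this
        omega
      · exact .inr (hpu' ▸ hxp.symm)
  calc #(ndbW G u v) ≤ #(insert u' (G.neighborFinset u')) := card_le_card hsub
    _ ≤ 4 := by
      grw [card_insert_le, card_neighborFinset_eq_degree, hreg.degree_eq]

end Finite

end SimpleGraph

/-- A regular NDB graph with valency `3`, diameter `4` and `γ = 5`
is triangle-free: no two adjacent vertices have a common neighbour. -/
theorem stmt_9 {V : Type*} [Fintype V] (G : SimpleGraph V) [DecidableRel G.Adj]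
    (hconn : G.Connected) (hreg : G.IsRegularOfDegree 3)
    (hdiam : HasDiam G 4) (hndb : IsNDB G 5) :
    ∀ u v : V, G.Adj u v → ∀ w : V, ¬ (G.Adj u w ∧ G.Adj v w) := by
  classical
  rintro u v huv w ⟨huw, hvw⟩
  have hcard : Fintype.card V = 3 * 5 + 1 := by
    have := three_mul_le_card_of_isNDB hndb huv huw hvw
    have := hconn.card_le_of_isNDB hreg hndb
    obtain ⟨m, hm⟩ := hreg.even_card (by decide)
    omega
  have hG := hconn.isGeodetic_of_isNDB hreg hndb hcard
  have hv := hG.dist_le_three hconn hreg hcard (hdiam.1 v)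
    (hG.card_level_two hconn hreg (by omega) huv.symm hvw huw)
  obtain ⟨u', -, -, hNu⟩ := hreg.exists_neighborFinset_eq huv huw hvw.ne
  have := card_ndbW_le_four hconn hreg hNu hvw hv
  rw [(hndb u v huv).1] at this
  omega
end
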